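/- arXiv:1905.01775 — 10 statements merged into one kernel-verified Lean document; each statement's English description precedes it below -/
import Mathlib

section
/- Let T be a k×k real symmetric positive definite matrix and D a real diagonal matrix of size k. For each m, let d_m denote the m-th leading principal minor determinant of the complex matrix T + i·D (and d_0 = 1). Then Re(d_{m+1} · conj(d_m)) > 0 for m = 0, 1, ..., k−1. -/
open Matrix Complex

private lemma sum_castLE_aux {n k : ℕ} (h : n ≤ k) (g : Fin k → ℝ)
    (hg : ∀ j : Fin k, ¬ ((j : ℕ) < n) → g j = 0) :
    ∑ j : Fin k, g j = ∑ i : Fin n, g (Fin.castLE h i) := by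
  classical
  have h1 : ∑ j : Fin k, g j
      = ∑ j ∈ Finset.univ.map ⟨Fin.castLE h, Fin.castLE_injective h⟩, g j := by
    symm
    apply Finset.sum_subset (Finset.subset_univ _)
    intro j _ hj
    apply hg
    intro hjn
    exact hj (Finset.mem_map.mpr ⟨⟨j, hjn⟩, Finset.mem_univ _, Fin.ext rfl⟩)
  rw [h1, Finset.sum_map]
  rfl

private lemma posdef_sub {k n : ℕ} (h : n ≤ k) {T : Matrix (Fin k) (Fin k) ℝ}
    (hT : T.PosDef) : (T.submatrix (Fin.castLE h) (Fin.castLE h)).PosDef := by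
  classical
  refine PosDef.of_dotProduct_mulVec_pos (hT.1.submatrix _) fun x hx => ?_
  set y : Fin k → ℝ := fun j => if hj : (j : ℕ) < n then x ⟨j, hj⟩ else 0 with hy
  have hy0 : ∀ j : Fin k, ¬((j : ℕ) < n) → y j = 0 := fun j hj => dif_neg hj
  have hyc : ∀ i : Fin n, y (Fin.castLE h i) = x i := fun i => dif_pos i.isLt
  have hyne : y ≠ 0 := by
    intro h0
    apply hx
    funext i
    have := congrFun h0 (Fin.castLE h i)
    rwa [hyc] at this
  have key : star y ⬝ᵥ T *ᵥ y
      = star x ⬝ᵥ (T.submatrix (Fin.castLE h) (Fin.castLE h)) *ᵥ x := by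
    rw [star_trivial, star_trivial]
    calc y ⬝ᵥ T *ᵥ y = ∑ j : Fin k, y j * (T *ᵥ y) j := rfl
      _ = ∑ i : Fin n, y (Fin.castLE h i) * (T *ᵥ y) (Fin.castLE h i) :=
          sum_castLE_aux h _ (fun j hj => by rw [hy0 j hj, zero_mul])
      _ = ∑ i : Fin n, x i * ∑ i' : Fin n,
            T (Fin.castLE h i) (Fin.castLE h i') * x i' := by
          refine Finset.sum_congr rfl fun i _ => ?_
          rw [hyc]
          congr 1
          have h1 : (T *ᵥ y) (Fin.castLE h i)
              = ∑ j : Fin k, T (Fin.castLE h i) j * y j := rfl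
          rw [h1, sum_castLE_aux h _ (fun j hj => by rw [hy0 j hj, mul_zero])]
          exact Finset.sum_congr rfl fun i' _ => by rw [hyc]
      _ = x ⬝ᵥ (T.submatrix (Fin.castLE h) (Fin.castLE h)) *ᵥ x := rfl
  rw [← key]
  exact hT.dotProduct_mulVec_pos hyne

private lemma re_form_pos {n : ℕ} {T' D' : Matrix (Fin n) (Fin n) ℝ}
    (hT' : T'.PosDef) (hD' : D'ᵀ = D')
    (x : Fin n → ℂ) (hx : x ≠ 0) :
    0 < ((star x) ⬝ᵥ (T'.map (fun t : ℝ => (t : ℂ)) + Complex.I • D'.map (fun t : ℝ => (t : ℂ))) *ᵥ x).re := by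
  classical
  set u : Fin n → ℝ := fun i => (x i).re with hu
  set v : Fin n → ℝ := fun i => (x i).im with hv
  have expand : ((star x) ⬝ᵥ (T'.map (fun t : ℝ => (t : ℂ)) + Complex.I • D'.map (fun t : ℝ => (t : ℂ))) *ᵥ x).re
      = ∑ i, ∑ j, (T' i j * (u i * u j + v i * v j) + D' i j * (v i * u j - u i * v j)) := by
    have h0 : (star x) ⬝ᵥ (T'.map (fun t : ℝ => (t : ℂ)) + Complex.I • D'.map (fun t : ℝ => (t : ℂ))) *ᵥ x
        = ∑ i, ∑ j, star (x i) * (((T' i j : ℂ) + Complex.I * (D' i j : ℂ)) * x j) := by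
      simp only [dotProduct, mulVec, Matrix.add_apply, Matrix.smul_apply, Matrix.map_apply,
        Pi.star_apply, smul_eq_mul, Finset.mul_sum]
    rw [h0, Complex.re_sum]
    refine Finset.sum_congr rfl fun i _ => ?_
    rw [Complex.re_sum]
    refine Finset.sum_congr rfl fun j _ => ?_
    simp only [Complex.star_def, Complex.mul_re, Complex.mul_im, Complex.add_re, Complex.add_im,
      Complex.I_re, Complex.I_im, Complex.ofReal_re, Complex.ofReal_im, Complex.conj_re,
      Complex.conj_im, hu, hv]
    ring
  have cancel : ∑ i, ∑ j, D' i j * (v i * u j - u i * v j) = 0 := by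
    have hsym : ∀ a b : Fin n, D' b a = D' a b := fun a b => by
      have := congrFun (congrFun hD' a) b
      rwa [Matrix.transpose_apply] at this
    have h1 : ∑ i, ∑ j, D' i j * (v i * u j) = ∑ i, ∑ j, D' i j * (u i * v j) := by
      rw [Finset.sum_comm]
      refine Finset.sum_congr rfl fun a _ => Finset.sum_congr rfl fun b _ => ?_
      rw [hsym a b]
      ring
    have h2 : ∑ i, ∑ j, D' i j * (v i * u j - u i * v j)
        = (∑ i, ∑ j, D' i j * (v i * u j)) - ∑ i, ∑ j, D' i j * (u i * v j) := by
      rw [← Finset.sum_sub_distrib]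
      refine Finset.sum_congr rfl fun i _ => ?_
      rw [← Finset.sum_sub_distrib]
      exact Finset.sum_congr rfl fun j _ => by ring
    rw [h2, h1, sub_self]
  have tsplit : ∑ i, ∑ j, (T' i j * (u i * u j + v i * v j) + D' i j * (v i * u j - u i * v j))
      = (u ⬝ᵥ T' *ᵥ u + v ⬝ᵥ T' *ᵥ v)
        + ∑ i, ∑ j, D' i j * (v i * u j - u i * v j) := by
    have hform : ∀ w : Fin n → ℝ, w ⬝ᵥ T' *ᵥ w = ∑ i, ∑ j, T' i j * (w i * w j) := by
      intro w
      simp only [dotProduct, mulVec, Finset.mul_sum]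
      exact Finset.sum_congr rfl fun i _ => Finset.sum_congr rfl fun j _ => by ring
    rw [hform, hform, ← Finset.sum_add_distrib, ← Finset.sum_add_distrib]
    refine Finset.sum_congr rfl fun i _ => ?_
    rw [← Finset.sum_add_distrib, ← Finset.sum_add_distrib]
    exact Finset.sum_congr rfl fun j _ => by ring
  rw [expand, tsplit, cancel, add_zero]
  have hex : u ≠ 0 ∨ v ≠ 0 := by
    by_contra hcon
    push_neg at hcon
    apply hx
    funext i
    have h1 := congrFun hcon.1 i
    have h2 := congrFun hcon.2 i
    exact Complex.ext h1 h2
  have hu0 : (0:ℝ) ≤ u ⬝ᵥ T' *ᵥ u := by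
    have := hT'.posSemidef.dotProduct_mulVec_nonneg u
    rwa [star_trivial] at this
  have hv0 : (0:ℝ) ≤ v ⬝ᵥ T' *ᵥ v := by
    have := hT'.posSemidef.dotProduct_mulVec_nonneg v
    rwa [star_trivial] at this
  rcases hex with hue | hve
  · have := hT'.dotProduct_mulVec_pos hue
    rw [star_trivial] at this
    linarith
  · have := hT'.dotProduct_mulVec_pos hve
    rw [star_trivial] at this
    linarith

/-- For `T` real symmetric positive definite and `D` real diagonal, the leading principal
minors `d_m` of `T + i·D` (with `d_0 = 1`) satisfy `Re(d_{m+1} · conj(d_m)) > 0`. -/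
theorem stmt1 (k : ℕ) (T D : Matrix (Fin k) (Fin k) ℝ)
    (hT : T.PosDef) (hD : D.IsDiag)
    (d : ℕ → ℂ)
    (hd : ∀ m : ℕ, ∀ h : m ≤ k,
      d m = (((T.map (fun x : ℝ => (x : ℂ)) + Complex.I • D.map (fun x : ℝ => (x : ℂ))).submatrix
        (Fin.castLE h) (Fin.castLE h)).det)) :
    ∀ m : ℕ, m < k → 0 < (d (m + 1) * (starRingEnd ℂ) (d m)).re := by
  intro m hm
  classical
  have hmk : m ≤ k := hm.le
  have hm1 : m + 1 ≤ k := hm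
  set Ac : Matrix (Fin k) (Fin k) ℂ :=
    T.map (fun x : ℝ => (x : ℂ)) + Complex.I • D.map (fun x : ℝ => (x : ℂ)) with hAc
  set A : Matrix (Fin (m+1)) (Fin (m+1)) ℂ := Ac.submatrix (Fin.castLE hm1) (Fin.castLE hm1)
    with hA
  set T1 : Matrix (Fin (m+1)) (Fin (m+1)) ℝ := T.submatrix (Fin.castLE hm1) (Fin.castLE hm1)
    with hT1
  set D1 : Matrix (Fin (m+1)) (Fin (m+1)) ℝ := D.submatrix (Fin.castLE hm1) (Fin.castLE hm1)
    with hD1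
  have hAeq : A = T1.map (fun t : ℝ => (t : ℂ)) + Complex.I • D1.map (fun t : ℝ => (t : ℂ)) := by
    ext i j
    simp [hA, hAc, hT1, hD1]
  have hT1pd : T1.PosDef := posdef_sub hm1 hT
  have hD1sym : D1ᵀ = D1 := by
    ext i j
    rw [Matrix.transpose_apply]
    by_cases hij : i = j
    · rw [hij]
    · have h1 : D1 j i = 0 := hD (fun hc => hij (Fin.castLE_injective hm1 hc).symm)
      have h2 : D1 i j = 0 := hD (fun hc => hij (Fin.castLE_injective hm1 hc))
      rw [h1, h2]
  have hform : ∀ x : Fin (m+1) → ℂ, x ≠ 0 → 0 < ((star x) ⬝ᵥ A *ᵥ x).re := by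
    intro x hx
    rw [hAeq]
    exact re_form_pos hT1pd hD1sym x hx
  have hdm1 : d (m+1) = A.det := hd (m+1) hm1
  have hdet : A.det ≠ 0 := by
    intro h0
    obtain ⟨xv, hxv, hxv0⟩ := (Matrix.exists_mulVec_eq_zero_iff).mpr h0
    have := hform xv hxv
    rw [hxv0] at this
    simp at this
  -- d m is the minor obtained by deleting the last row and column
  have hdm : d m = (A.submatrix Fin.castSucc Fin.castSucc).det := by
    rw [hd m hmk, hA, Matrix.submatrix_submatrix]
    rfl
  have hadj : A.adjugate (Fin.last m) (Fin.last m) = d m := by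
    rw [Matrix.adjugate_fin_succ_eq_det_submatrix, Fin.succAbove_last, hdm]
    have : ((Fin.last m : Fin (m+1)) : ℕ) + ((Fin.last m : Fin (m+1)) : ℕ) = m + m := rfl
    rw [this, (Even.add_self m).neg_one_pow, one_mul]
  -- the inverse entry
  have hunit : IsUnit A.det := isUnit_iff_ne_zero.mpr hdet
  have hinv_entry : A⁻¹ (Fin.last m) (Fin.last m) = (A.det)⁻¹ * d m := by
    rw [Matrix.inv_def, Matrix.smul_apply, hadj, smul_eq_mul, Ring.inverse_eq_inv']
  set xv : Fin (m+1) → ℂ := A⁻¹ *ᵥ Pi.single (Fin.last m) 1 with hxv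
  have hAxv : A *ᵥ xv = Pi.single (Fin.last m) 1 := by
    rw [hxv, Matrix.mulVec_mulVec, Matrix.mul_nonsing_inv A hunit, Matrix.one_mulVec]
  have hxvne : xv ≠ 0 := by
    intro h0
    have : A *ᵥ xv = 0 := by rw [h0, Matrix.mulVec_zero]
    rw [hAxv] at this
    have := congrFun this (Fin.last m)
    simp at this
  have hxvlast : xv (Fin.last m) = A⁻¹ (Fin.last m) (Fin.last m) := by
    rw [hxv]
    simp [Matrix.mulVec, dotProduct, Pi.single_apply]
  have hformxv : ((star xv) ⬝ᵥ A *ᵥ xv).re = (xv (Fin.last m)).re := by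
    rw [hAxv]
    simp [dotProduct, Pi.single_apply]
  have hpos : 0 < (A⁻¹ (Fin.last m) (Fin.last m)).re := by
    have := hform xv hxvne
    rw [hformxv, hxvlast] at this
    exact this
  -- conclude
  set q : ℂ := A⁻¹ (Fin.last m) (Fin.last m) with hq
  have hdmq : d m = q * d (m+1) := by
    rw [hinv_entry, hdm1]
    field_simp
  have hmain : d (m+1) * (starRingEnd ℂ) (d m)
      = (Complex.normSq (d (m+1)) : ℂ) * (starRingEnd ℂ) q := by
    rw [hdmq, RingHom.map_mul,
      show d (m+1) * ((starRingEnd ℂ) q * (starRingEnd ℂ) (d (m+1)))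
        = ((starRingEnd ℂ) (d (m+1)) * d (m+1)) * (starRingEnd ℂ) q from by ring,
      ← Complex.normSq_eq_conj_mul_self]
  rw [hmain]
  have hns : 0 < Complex.normSq (d (m+1)) := by
    apply Complex.normSq_pos.mpr
    rw [hdm1]
    exact hdet
  have : ((Complex.normSq (d (m+1)) : ℂ) * (starRingEnd ℂ) q).re
      = Complex.normSq (d (m+1)) * q.re := by
    simp [Complex.mul_re]
  rw [this]
  exact mul_pos hns hpos
end

section
/- For any positive integer k ≥ 2, the integral over [0,1]^k of 2^k/(1 − u₁²u₂²⋯u_k²) with respect to du₁⋯du_k equals the Hurwitz zeta value ζ(k, 1/2) = Σ_{n≥0} (n + 1/2)^{−k}. -/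
open MeasureTheory

-- summability of the target series
lemma aux_summable {k : ℕ} (hk : 2 ≤ k) :
    Summable (fun n : ℕ => 1 / ((n : ℝ) + 1/2) ^ k) := by
  have h1 : Summable (fun n : ℕ => 1 / ((n : ℝ) + 1) ^ k) := by
    have := (summable_nat_add_iff (f := fun n : ℕ => 1 / (n : ℝ) ^ k) 1).2
      (Real.summable_one_div_nat_pow.mpr (by omega))
    simpa [Nat.cast_add] using this
  have h2 : Summable (fun n : ℕ => (2:ℝ) ^ k * (1 / ((n : ℝ) + 1) ^ k)) := h1.mul_left _
  refine h2.of_nonneg_of_le (fun n => by positivity) (fun n => ?_)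
  have hn2 : (0:ℝ) < (n : ℝ) + 1/2 := by positivity
  have hle : ((n : ℝ) + 1) / 2 ≤ (n : ℝ) + 1/2 := by linarith [Nat.cast_nonneg (α := ℝ) n]
  have hpow : (((n : ℝ) + 1) / 2) ^ k ≤ ((n : ℝ) + 1/2) ^ k :=
    pow_le_pow_left₀ (by positivity) hle k
  have h3 : 1 / ((n : ℝ) + 1/2) ^ k ≤ 1 / (((n : ℝ) + 1) / 2) ^ k :=
    one_div_le_one_div_of_le (by positivity) hpow
  calc 1 / ((n : ℝ) + 1/2) ^ k ≤ 1 / (((n : ℝ) + 1) / 2) ^ k := h3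
    _ = (2:ℝ) ^ k * (1 / ((n : ℝ) + 1) ^ k) := by
        rw [div_pow]
        field_simp

-- value of each term
lemma aux_term (k n : ℕ) :
    ∫ u : Fin k → ℝ in Set.Icc (0 : Fin k → ℝ) 1, ∏ i, (2 * (u i) ^ (2*n))
      = 1 / ((n : ℝ) + 1/2) ^ k := by
  have hind : ∀ u : Fin k → ℝ,
      (Set.Icc (0 : Fin k → ℝ) 1).indicator (fun u => ∏ i, (2 * (u i) ^ (2*n))) u
        = ∏ i, (Set.Icc (0:ℝ) 1).indicator (fun t => 2 * t ^ (2*n)) (u i) := by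
    intro u
    by_cases hu : u ∈ Set.Icc (0 : Fin k → ℝ) 1
    · rw [Set.indicator_of_mem hu]
      rw [← Set.pi_univ_Icc, Set.mem_univ_pi] at hu
      simp only [Pi.zero_apply, Pi.one_apply] at hu
      refine Finset.prod_congr rfl (fun i _ => ?_)
      rw [Set.indicator_of_mem (hu i)]
    · rw [Set.indicator_of_notMem hu]
      rw [← Set.pi_univ_Icc, Set.mem_univ_pi] at hu
      push_neg at hu
      obtain ⟨i, hi⟩ := hu
      simp only [Pi.zero_apply, Pi.one_apply] at hi
      exact (Finset.prod_eq_zero (Finset.mem_univ i)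
        (by rw [Set.indicator_of_notMem hi])).symm
  have h1 : ∫ t : ℝ, (Set.Icc (0:ℝ) 1).indicator (fun t => 2 * t ^ (2*n)) t
      = 1 / ((n : ℝ) + 1/2) := by
    rw [integral_indicator measurableSet_Icc, integral_Icc_eq_integral_Ioc,
      ← intervalIntegral.integral_of_le zero_le_one]
    rw [intervalIntegral.integral_const_mul, integral_pow]
    have : ((2*n : ℕ) : ℝ) + 1 ≠ 0 := by positivity
    field_simp
    push_cast
    ring
  rw [← integral_indicator measurableSet_Icc]
  calc ∫ u : Fin k → ℝ, (Set.Icc (0 : Fin k → ℝ) 1).indicator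
        (fun u => ∏ i, (2 * (u i) ^ (2*n))) u
      = ∫ u : Fin k → ℝ, ∏ i, (Set.Icc (0:ℝ) 1).indicator (fun t => 2 * t ^ (2*n)) (u i) := by
        exact integral_congr_ae (Filter.Eventually.of_forall hind)
    _ = (∫ t : ℝ, (Set.Icc (0:ℝ) 1).indicator (fun t => 2 * t ^ (2*n)) t) ^ (Fintype.card (Fin k)) :=
        integral_fintype_prod_eq_pow _
    _ = 1 / ((n : ℝ) + 1/2) ^ k := by rw [h1, Fintype.card_fin, div_pow, one_pow]

/-- For `k ≥ 2`, `∫_{[0,1]^k} 2^k/(1 − u₁²⋯u_k²) du = ζ(k, 1/2) = Σ_{n≥0} (n+1/2)^{−k}`. -/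
theorem stmt2 (k : ℕ) (hk : 2 ≤ k) :
    ∫ u : Fin k → ℝ in Set.Icc (0 : Fin k → ℝ) 1,
        (2 : ℝ) ^ k / (1 - ∏ i, (u i) ^ 2)
      = ∑' n : ℕ, 1 / ((n : ℝ) + 1/2) ^ k := by
  have hkpos : 0 < k := by omega
  set T : Set (Fin k → ℝ) := Set.pi Set.univ (fun _ => Set.Ioo (0:ℝ) 1) with hTdef
  have hTmeas : MeasurableSet T := MeasurableSet.univ_pi (fun _ => measurableSet_Ioo)
  have hae : T =ᵐ[volume] Set.Icc (0 : Fin k → ℝ) 1 := Measure.univ_pi_Ioo_ae_eq_Icc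
  have hTsub : T ⊆ Set.Icc (0 : Fin k → ℝ) 1 := by
    rw [← Set.pi_univ_Icc]
    exact Set.pi_mono (fun i _ => Set.Ioo_subset_Icc_self)
  -- the summand functions
  set f : ℕ → (Fin k → ℝ) → ℝ := fun n u => ∏ i, (2 * (u i) ^ (2*n)) with hfdef
  have hfcont : ∀ n, Continuous (f n) := by
    intro n
    exact continuous_finset_prod _ (fun i _ => by fun_prop)
  have hfnonneg : ∀ n, ∀ u ∈ T, 0 ≤ f n u := by
    intro n u hu
    refine Finset.prod_nonneg (fun i _ => ?_)
    have := (hu i (Set.mem_univ i)).1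
    positivity
  -- pointwise series identity on T
  have hpt : ∀ u ∈ T, (2 : ℝ) ^ k / (1 - ∏ i, (u i) ^ 2) = ∑' n : ℕ, f n u := by
    intro u hu
    have h0 : ∀ i, 0 < u i ∧ u i < 1 := fun i => ⟨(hu i (Set.mem_univ i)).1,
      (hu i (Set.mem_univ i)).2⟩
    set r : ℝ := ∏ i, (u i) ^ 2 with hrdef
    have hr0 : 0 ≤ r := Finset.prod_nonneg (fun i _ => sq_nonneg _)
    have hr1 : r < 1 := by
      have := Finset.prod_lt_prod_of_nonempty (f := fun i : Fin k => (u i)^2)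
        (g := fun _ : Fin k => (1:ℝ)) (fun i _ => by have := (h0 i).1; positivity)
        (fun i _ => by
          have h1 := (h0 i).1; have h2 := (h0 i).2
          calc (u i)^2 ≤ u i * 1 := by nlinarith
            _ < 1 := by nlinarith)
        ⟨⟨0, hkpos⟩, Finset.mem_univ _⟩
      simpa using this
    have hfr : ∀ n, f n u = 2 ^ k * r ^ n := by
      intro n
      rw [hfdef]
      simp only [Finset.prod_mul_distrib, Finset.prod_const, Finset.card_univ, Fintype.card_fin]
      rw [hrdef, ← Finset.prod_pow]
      congr 1
      exact Finset.prod_congr rfl (fun i _ => by rw [pow_mul])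
    rw [tsum_congr hfr, tsum_mul_left, tsum_geometric_of_lt_one hr0 hr1]
    rw [div_eq_mul_inv]
  -- integrability of each f n on T
  have hfint : ∀ n, IntegrableOn (f n) T := by
    intro n
    exact (ContinuousOn.integrableOn_compact isCompact_Icc (hfcont n).continuousOn).mono_set hTsub
  -- lintegral bound
  have hlint : ∀ n, ∫⁻ u in T, ‖f n u‖₊ ∂volume = ENNReal.ofReal (1 / ((n : ℝ) + 1/2) ^ k) := by
    intro n
    have hnn : 0 ≤ᵐ[volume.restrict T] f n :=
      (ae_restrict_iff' hTmeas).2 (Filter.Eventually.of_forall (hfnonneg n))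
    have := ofReal_integral_eq_lintegral_ofReal (hfint n) hnn
    have heq : ∫⁻ u in T, ‖f n u‖₊ ∂volume = ∫⁻ u in T, ENNReal.ofReal (f n u) ∂volume := by
      refine lintegral_congr_ae ?_
      filter_upwards [(ae_restrict_iff' hTmeas).2
        (Filter.Eventually.of_forall (hfnonneg n))] with u hu
      exact Real.enorm_eq_ofReal hu
    rw [heq, ← this, setIntegral_congr_set hae, aux_term k n]
  calc ∫ u : Fin k → ℝ in Set.Icc (0 : Fin k → ℝ) 1, (2 : ℝ) ^ k / (1 - ∏ i, (u i) ^ 2)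
      = ∫ u in T, (2 : ℝ) ^ k / (1 - ∏ i, (u i) ^ 2) := (setIntegral_congr_set hae).symm
    _ = ∫ u in T, ∑' n : ℕ, f n u := setIntegral_congr_fun hTmeas (fun u hu => hpt u hu)
    _ = ∑' n : ℕ, ∫ u in T, f n u := by
        refine integral_tsum (fun n => ((hfcont n).aestronglyMeasurable).restrict) ?_
        have htot : ∑' n : ℕ, ∫⁻ u in T, ‖f n u‖₊ ∂volume
            = ENNReal.ofReal (∑' n : ℕ, 1 / ((n : ℝ) + 1/2) ^ k) := by
          rw [ENNReal.ofReal_tsum_of_nonneg (fun n => by positivity) (aux_summable hk)]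
          exact tsum_congr hlint
        rw [show (∑' n : ℕ, ∫⁻ u in T, ‖f n u‖ₑ ∂volume) = _ from htot]
        exact ENNReal.ofReal_ne_top
    _ = ∑' n : ℕ, 1 / ((n : ℝ) + 1/2) ^ k := by
        refine tsum_congr (fun n => ?_)
        rw [setIntegral_congr_set hae, aux_term k n]
end

section
/- Define p_n(t) = −(1/(n+1/2)²) · C(−1/2, n)^{−2} · Σ_{k=0}^n C(−1/2, k)² t^k, where C(−1/2, m) is the generalized binomial coefficient. Then the hypergeometric operator D = t(1−t) d²/dt² + (1−2t) d/dt − 1/4 satisfies D p_n(t) = t^n for every nonnegative integer n. -/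
open Polynomial

/-- Generalized binomial coefficient `C(-1/2, m)` as a rational number. -/
noncomputable def negHalfChoose (m : ℕ) : ℚ :=
  (∏ i ∈ Finset.range m, (-1/2 - (i : ℚ))) / (m.factorial : ℚ)

lemma nhc_ne (m : ℕ) : negHalfChoose m ≠ 0 := by
  unfold negHalfChoose
  apply div_ne_zero
  · rw [Finset.prod_ne_zero_iff]
    intro i _
    have : (0:ℚ) ≤ (i:ℚ) := by positivity
    intro h; nlinarith
  · exact_mod_cast m.factorial_ne_zero

lemma nhc_succ (m : ℕ) : negHalfChoose (m+1) * ((m:ℚ)+1) = negHalfChoose m * (-1/2 - m) := by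
  unfold negHalfChoose
  rw [Finset.prod_range_succ, Nat.factorial_succ]
  have h1 : ((m.factorial : ℚ)) ≠ 0 := by exact_mod_cast m.factorial_ne_zero
  have h2 : ((m:ℚ)+1) ≠ 0 := by positivity
  push_cast
  field_simp

lemma nhc_key (m : ℕ) :
    negHalfChoose (m+1) ^ 2 * ((m:ℚ)+1)^2 = negHalfChoose m ^ 2 * ((m:ℚ)+1/2)^2 := by
  rw [← mul_pow, nhc_succ m, mul_pow]
  congr 1
  ring

lemma Dpow (m : ℕ) :
    X * (1 - X) * derivative (derivative ((X:ℚ[X]) ^ (m+1)))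
      + (1 - 2 * X) * derivative ((X:ℚ[X]) ^ (m+1))
      - C (1/4 : ℚ) * X ^ (m+1)
    = C (((m:ℚ)+1)^2) * X ^ m - C (((m:ℚ)+1+1/2)^2) * X ^ (m+1) := by
  have h : (2:ℚ[X]) * C (1/2:ℚ) = 1 := by
    rw [← map_ofNat (C : ℚ →+* ℚ[X]) 2, ← C_mul]
    norm_num
  rw [show (1/4:ℚ) = (1/2)^2 by norm_num]
  cases m with
  | zero =>
      simp only [zero_add, pow_one, derivative_X, derivative_one, Nat.cast_zero, pow_zero]
      simp only [C_pow, map_add, C_1, map_ofNat]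
      linear_combination X * h
  | succ k =>
      rw [derivative_X_pow, derivative_C_mul, derivative_X_pow]
      simp only [Nat.add_sub_cancel]
      push_cast
      simp only [C_pow, map_add, C_1, map_ofNat]
      linear_combination (X^2 * X^k * (C (k:ℚ) + 2)) * h

lemma sumD (n : ℕ) :
    X * (1 - X) * derivative (derivative (∑ k ∈ Finset.range (n+1), C (negHalfChoose k ^ 2) * X ^ k))
      + (1 - 2 * X) * derivative (∑ k ∈ Finset.range (n+1), C (negHalfChoose k ^ 2) * X ^ k)
      - C (1/4 : ℚ) * ∑ k ∈ Finset.range (n+1), C (negHalfChoose k ^ 2) * X ^ k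
    = C (-(negHalfChoose n ^ 2 * ((n:ℚ)+1/2)^2)) * X ^ n := by
  induction n with
  | zero =>
      simp [negHalfChoose]
      norm_num
  | succ n ih =>
      rw [Finset.sum_range_succ]
      have hd := Dpow n
      have hkey : C (negHalfChoose (n+1) ^ 2 * ((n:ℚ)+1)^2)
          = C (negHalfChoose n ^ 2 * ((n:ℚ)+1/2)^2) := by rw [nhc_key]
      simp only [derivative_add, derivative_C_mul]
      simp only [map_neg, C_mul, C_pow, map_add, C_1, map_ofNat, Nat.cast_succ] at *
      linear_combination ih + (C (negHalfChoose (n+1)))^2 * hd + X^n * hkey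

/-- The polynomial `p_n(t) = -(1/(n+1/2)²) C(-1/2,n)^{-2} Σ_{k=0}^n C(-1/2,k)² t^k`. -/
noncomputable def pPoly (n : ℕ) : Polynomial ℚ :=
  C (-(1 / ((n : ℚ) + 1/2) ^ 2) * (negHalfChoose n) ⁻¹ ^ 2) *
    ∑ k ∈ Finset.range (n + 1), C ((negHalfChoose k) ^ 2) * X ^ k

/-- The hypergeometric operator `D = t(1−t) d²/dt² + (1−2t) d/dt − 1/4`
satisfies `D p_n(t) = t^n`. -/
theorem stmt6 (n : ℕ) :
    X * (1 - X) * derivative (derivative (pPoly n))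
      + (1 - 2 * X) * derivative (pPoly n)
      - C (1/4 : ℚ) * pPoly n
    = X ^ n := by
  unfold pPoly
  have hs := sumD n
  simp only [derivative_C_mul]
  have hc : (-(1 / ((n : ℚ) + 1/2) ^ 2) * (negHalfChoose n) ⁻¹ ^ 2) *
      (-(negHalfChoose n ^ 2 * ((n:ℚ)+1/2)^2)) = 1 := by
    have h1 : negHalfChoose n ≠ 0 := nhc_ne n
    have h2 : ((n:ℚ)+1/2) ≠ 0 := by positivity
    field_simp
  calc X * (1 - X) * (C (-(1 / ((n : ℚ) + 1/2) ^ 2) * (negHalfChoose n) ⁻¹ ^ 2) *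
          derivative (derivative (∑ k ∈ Finset.range (n+1), C (negHalfChoose k ^ 2) * X ^ k)))
      + (1 - 2 * X) * (C (-(1 / ((n : ℚ) + 1/2) ^ 2) * (negHalfChoose n) ⁻¹ ^ 2) *
          derivative (∑ k ∈ Finset.range (n+1), C (negHalfChoose k ^ 2) * X ^ k))
      - C (1/4 : ℚ) * (C (-(1 / ((n : ℚ) + 1/2) ^ 2) * (negHalfChoose n) ⁻¹ ^ 2) *
          ∑ k ∈ Finset.range (n+1), C (negHalfChoose k ^ 2) * X ^ k)
      = C (-(1 / ((n : ℚ) + 1/2) ^ 2) * (negHalfChoose n) ⁻¹ ^ 2) *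
        (X * (1 - X) * derivative (derivative (∑ k ∈ Finset.range (n+1), C (negHalfChoose k ^ 2) * X ^ k))
          + (1 - 2 * X) * derivative (∑ k ∈ Finset.range (n+1), C (negHalfChoose k ^ 2) * X ^ k)
          - C (1/4 : ℚ) * ∑ k ∈ Finset.range (n+1), C (negHalfChoose k ^ 2) * X ^ k) := by ring
    _ = C (-(1 / ((n : ℚ) + 1/2) ^ 2) * (negHalfChoose n) ⁻¹ ^ 2) *
        (C (-(negHalfChoose n ^ 2 * ((n:ℚ)+1/2)^2)) * X ^ n) := by rw [hs]
    _ = X ^ n := by rw [← mul_assoc, ← C_mul, hc, C_1, one_mul]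
end

section
/- Let p be an odd prime and n a positive integer. For all positive integers j with 1 ≤ 2j+1 < p^{n+1}, the p-adic valuation of the central binomial coefficient C(2j, j) satisfies ord_p C(2j, j) ≤ n − ord_p(2j+1). -/
/-!
By Kummer's theorem, `ord_p C(2j, j)` is the number of `i ∈ [1, n]` at which adding `j + j` in
base `p` carries, i.e. `p ^ i ≤ 2 (j mod p ^ i)`. If `p ^ i ∣ 2j + 1`, then `2 (j mod p ^ i) + 1`
is a positive multiple of `p ^ i` below `2 p ^ i`, so it equals `p ^ i` and there is no carry.
Hence all carries happen at the `n - ord_p(2j+1)` positions `ord_p(2j+1) < i ≤ n`.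
-/

open Finset

theorem two_mul_mod_lt_of_dvd_two_mul_add_one {m j : ℕ} (h : m ∣ 2 * j + 1) :
    2 * (j % m) < m := by
  have hm : m ≠ 0 := by rintro rfl; omega
  have hdvd : m ∣ 2 * (j % m) + 1 := by
    rw [Nat.dvd_iff_mod_eq_zero, Nat.add_mod, Nat.mul_mod, Nat.mod_mod, ← Nat.mul_mod,
      ← Nat.add_mod, ← Nat.dvd_iff_mod_eq_zero]
    exact h
  have hlt : 2 * (j % m) + 1 < 2 * m := by
    have := Nat.mod_lt j (Nat.pos_of_ne_zero hm)
    omega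
  have := Nat.eq_of_dvd_of_lt_two_mul (Nat.succ_ne_zero _) hdvd hlt
  omega

theorem no_carry_of_le_padicValNat_two_mul_add_one {p i j : ℕ} [Fact p.Prime]
    (hi : i ≤ padicValNat p (2 * j + 1)) : ¬ p ^ i ≤ j % p ^ i + j % p ^ i := by
  have := two_mul_mod_lt_of_dvd_two_mul_add_one
    ((padicValNat_dvd_iff_le (Nat.succ_ne_zero (2 * j))).2 hi)
  omega

theorem stmt8_general (p : ℕ) (hp : p.Prime) (n j : ℕ)
    (hlt : 2 * j + 1 < p ^ (n + 1)) :
    padicValNat p ((2 * j).choose j) ≤ n - padicValNat p (2 * j + 1) := by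
  have : Fact p.Prime := ⟨hp⟩
  have hlog : Nat.log p (j + j) < n + 1 := Nat.log_lt_of_lt_pow' (Nat.succ_ne_zero n) (by omega)
  rw [two_mul, padicValNat_choose' hlog, ← two_mul]
  refine (card_le_card (t := Ico (padicValNat p (2 * j + 1) + 1) (n + 1)) ?_).trans (by simp)
  intro i hi
  simp only [mem_filter, mem_Ico] at hi ⊢
  have := mt no_carry_of_le_padicValNat_two_mul_add_one (not_not.mpr hi.2)
  omega

/-- For an odd prime `p`, `n ≥ 1` and `j ≥ 1` with `2j+1 < p^{n+1}`, the `p`-adic valuation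
of the central binomial coefficient satisfies `ord_p C(2j,j) ≤ n − ord_p(2j+1)`. -/
theorem stmt8 (p : ℕ) (hp : p.Prime) (hodd : Odd p) (n j : ℕ) (hn : 1 ≤ n) (hj : 1 ≤ j)
    (hlt : 2 * j + 1 < p ^ (n + 1)) :
    padicValNat p ((2 * j).choose j) ≤ n - padicValNat p (2 * j + 1) :=
  stmt8_general p hp n j hlt
end

section
/- Let p be an odd prime, n, s positive integers. Define Z^even_s(k) = (−1)^s Σ_{k > j₁ > ⋯ > j_s ≥ 0} Π_{i=1}^s (j_i + 1/2)^{−2}. Then for all integers k with 0 ≤ k ≤ (p^n − 1)/2, the congruence p^{2sn} Z^even_s(kp) ≡ p^{2s(n−1)} Z^even_s(k) (mod p^n) holds (as a congruence of rational numbers whose denominators are prime to p). -/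
/-- `Z^even_s(k) = (−1)^s Σ_{k > j₁ > ⋯ > j_s ≥ 0} Π (j_i + 1/2)^{−2}`, the sum over
strictly decreasing `s`-tuples below `k` being identified with `s`-element subsets of
`{0,…,k−1}`. -/
def Zeven (s k : ℕ) : ℚ :=
  (-1) ^ s * ∑ T ∈ Finset.powersetCard s (Finset.range k),
    ∏ j ∈ T, (1 / ((j : ℚ) + 1/2) ^ 2)

/-- Congruence of rationals mod `p^n`: `a − b = p^n·(u/v)` with `p ∤ v`. -/
def ratModEq (p : ℕ) (n : ℕ) (a b : ℚ) : Prop :=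
  ∃ u v : ℤ, ¬ (p : ℤ) ∣ v ∧ a - b = (p : ℚ) ^ n * u / v

/-- `p`-integral rationals. -/
def IsPInt (p : ℕ) (q : ℚ) : Prop := ∃ u v : ℤ, ¬ (p : ℤ) ∣ v ∧ q = (u : ℚ) / v

namespace IsPIntAux

variable {p : ℕ}

lemma intCast (hp : p.Prime) (m : ℤ) : IsPInt p m :=
  ⟨m, 1, fun h => (Nat.prime_iff_prime_int.mp hp).not_dvd_one h, by simp⟩

lemma zero (hp : p.Prime) : IsPInt p 0 := by simpa using intCast hp 0

lemma one (hp : p.Prime) : IsPInt p 1 := by simpa using intCast hp 1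

lemma mul (hp : p.Prime) {a b : ℚ} (ha : IsPInt p a) (hb : IsPInt p b) : IsPInt p (a * b) := by
  obtain ⟨u1, v1, hv1, rfl⟩ := ha
  obtain ⟨u2, v2, hv2, rfl⟩ := hb
  refine ⟨u1 * u2, v1 * v2, ?_, ?_⟩
  · intro h
    rcases (Nat.prime_iff_prime_int.mp hp).dvd_mul.mp h with h | h
    exacts [hv1 h, hv2 h]
  · push_cast
    rw [div_mul_div_comm]

lemma add (hp : p.Prime) {a b : ℚ} (ha : IsPInt p a) (hb : IsPInt p b) : IsPInt p (a + b) := by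
  obtain ⟨u1, v1, hv1, rfl⟩ := ha
  obtain ⟨u2, v2, hv2, rfl⟩ := hb
  have hv1' : (v1 : ℚ) ≠ 0 := Int.cast_ne_zero.mpr fun h => hv1 (by simp [h])
  have hv2' : (v2 : ℚ) ≠ 0 := Int.cast_ne_zero.mpr fun h => hv2 (by simp [h])
  refine ⟨u1 * v2 + v1 * u2, v1 * v2, ?_, ?_⟩
  · intro h
    rcases (Nat.prime_iff_prime_int.mp hp).dvd_mul.mp h with h | h
    exacts [hv1 h, hv2 h]
  · push_cast
    rw [div_add_div _ _ hv1' hv2']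

lemma prod (hp : p.Prime) {α : Type*} {T : Finset α} {g : α → ℚ} (hg : ∀ j ∈ T, IsPInt p (g j)) :
    IsPInt p (∏ j ∈ T, g j) :=
  Finset.prod_induction g (IsPInt p) (fun _ _ => mul hp) (one hp) hg

lemma sum (hp : p.Prime) {α : Type*} {T : Finset α} {g : α → ℚ} (hg : ∀ j ∈ T, IsPInt p (g j)) :
    IsPInt p (∑ j ∈ T, g j) :=
  Finset.sum_induction g (IsPInt p) (fun _ _ => add hp) (zero hp) hg

/-- The key valuation bound: for `0 < c < p^(n+1)`, `p^(2n)/c²` is `p`-integral. -/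
lemma key (hp : p.Prime) {n c : ℕ} (hc0 : 0 < c) (hc : c < p ^ (n + 1)) :
    IsPInt p ((p : ℚ) ^ (2 * n) / (c : ℚ) ^ 2) := by
  set v := c.factorization p with hv
  have hd : p ^ v * (c / p ^ v) = c := Nat.ordProj_mul_ordCompl_eq_self c p
  set d := c / p ^ v with hdd
  have hpd : ¬ p ∣ d := Nat.not_dvd_ordCompl hp hc0.ne'
  have hvn : v ≤ n := by
    have h1 : p ^ v ≤ c := Nat.ordProj_le p hc0.ne'
    have h2 := (Nat.pow_lt_pow_iff_right hp.one_lt).mp (lt_of_le_of_lt h1 hc)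
    omega
  have hd0 : d ≠ 0 := by
    intro h
    exact hpd (h ▸ dvd_zero p)
  refine ⟨(p : ℤ) ^ (2 * (n - v)), (d : ℤ) ^ 2, ?_, ?_⟩
  · intro h
    have : (p : ℤ) ∣ (d : ℤ) := (Nat.prime_iff_prime_int.mp hp).dvd_of_dvd_pow h
    exact hpd (by exact_mod_cast this)
  · have hp0 : (p : ℚ) ≠ 0 := Nat.cast_ne_zero.mpr hp.pos.ne'
    have hd0' : (d : ℚ) ≠ 0 := Nat.cast_ne_zero.mpr hd0
    have hc' : (c : ℚ) = (p : ℚ) ^ v * (d : ℚ) := by exact_mod_cast hd.symm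
    have hc0' : (c : ℚ) ≠ 0 := Nat.cast_ne_zero.mpr hc0.ne'
    push_cast
    rw [div_eq_div_iff (by positivity) (by positivity), hc',
      show 2 * n = 2 * (n - v) + 2 * v by omega]
    ring

end IsPIntAux

/-- For an odd prime `p`, positive integers `n, s`, and `0 ≤ k ≤ (p^n−1)/2`,
`p^{2sn} Z^even_s(kp) ≡ p^{2s(n−1)} Z^even_s(k) (mod p^n)`. -/
theorem stmt9 (p : ℕ) (hp : p.Prime) (hodd : Odd p) (n s : ℕ) (hn : 1 ≤ n) (hs : 1 ≤ s)
    (k : ℕ) (hk : 2 * k + 1 ≤ p ^ n) :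
    ratModEq p n ((p : ℚ) ^ (2 * s * n) * Zeven s (k * p))
      ((p : ℚ) ^ (2 * s * (n - 1)) * Zeven s k) := by
  obtain ⟨t, hpt⟩ := hodd
  have hp0 : (0 : ℚ) < p := by exact_mod_cast hp.pos
  have hpQ : (p : ℚ) ≠ 0 := hp0.ne'
  have hpQ2 : (p : ℚ) = 2 * (t : ℚ) + 1 := by exact_mod_cast hpt
  set f : ℕ → ℚ := fun j => 1 / ((j : ℚ) + 1/2) ^ 2 with hf
  have hinj : Function.Injective (fun m => p * m + t) := by
    intro a b h
    simp only [add_left_inj] at h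
    exact Nat.eq_of_mul_eq_mul_left hp.pos h
  set e : ℕ ↪ ℕ := ⟨fun m => p * m + t, hinj⟩ with he
  have htp : t < p := by omega
  have hsub : (Finset.range k).map e ⊆ Finset.range (k * p) := by
    intro j hj
    simp only [Finset.mem_map, Finset.mem_range, he, Function.Embedding.coeFn_mk] at hj ⊢
    obtain ⟨m, hm, rfl⟩ := hj
    have h2 : p * (m + 1) ≤ p * k := Nat.mul_le_mul_left p hm
    nlinarith
  set P := Finset.powersetCard s (Finset.range (k * p)) with hP
  set B := Finset.powersetCard s ((Finset.range k).map e) with hB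
  have hBP : B ⊆ P := Finset.powersetCard_mono hsub
  set F : Finset ℕ → ℚ := fun T => ∏ j ∈ T, f j with hF
  have hsplit : ∑ T ∈ P, F T = ∑ T ∈ P \ B, F T + ∑ T ∈ B, F T := (Finset.sum_sdiff hBP).symm
  -- the sum over good subsets
  have hfe : ∀ m : ℕ, f (e m) = 1 / (p : ℚ) ^ 2 * f m := by
    intro m
    have harg : ((e m : ℕ) : ℚ) + 1/2 = (p : ℚ) * ((m : ℚ) + 1/2) := by
      simp only [he, Function.Embedding.coeFn_mk]
      push_cast
      rw [hpQ2]; ring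
    simp only [hf]
    rw [harg, mul_pow, ← one_div_mul_one_div]
  have hBsum : ∑ T ∈ B, F T
      = (1 / (p : ℚ) ^ 2) ^ s * ∑ U ∈ Finset.powersetCard s (Finset.range k), F U := by
    rw [hB, Finset.powersetCard_map, Finset.sum_map, Finset.mul_sum]
    refine Finset.sum_congr rfl fun U hU => ?_
    have hcard : U.card = s := (Finset.mem_powersetCard.mp hU).2
    show F (U.map e) = _
    simp only [hF, Finset.prod_map]
    rw [Finset.prod_congr rfl fun m _ => hfe m, Finset.prod_mul_distrib,
      Finset.prod_const, hcard]
  obtain ⟨n, rfl⟩ : ∃ m, n = m + 1 := ⟨n - 1, by omega⟩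
  have hpow : (p : ℚ) ^ (2 * s * (n + 1)) * (1 / (p : ℚ) ^ 2) ^ s
      = (p : ℚ) ^ (2 * s * (n + 1 - 1)) := by
    simp only [Nat.add_sub_cancel]
    rw [div_pow, one_pow, ← pow_mul, show 2 * s * (n + 1) = 2 * s * n + 2 * s by ring,
      pow_add]
    field_simp
  have hdiff : (p : ℚ) ^ (2 * s * (n + 1)) * Zeven s (k * p)
        - (p : ℚ) ^ (2 * s * (n + 1 - 1)) * Zeven s k
      = (-1) ^ s * ∑ T ∈ P \ B, (p : ℚ) ^ (2 * s * (n + 1)) * F T := by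
    rw [show Zeven s (k * p) = (-1 : ℚ) ^ s * ∑ T ∈ P, F T from rfl,
      show Zeven s k
        = (-1 : ℚ) ^ s * ∑ U ∈ Finset.powersetCard s (Finset.range k), F U from rfl,
      hsplit, hBsum, ← Finset.mul_sum]
    linear_combination ((-1 : ℚ) ^ s
      * ∑ U ∈ Finset.powersetCard s (Finset.range k), F U) * hpow
  -- each bad term is p^(n+1) times a p-integral rational
  have hbound : ∀ j : ℕ, j < k * p → 2 * j + 1 < p ^ (n + 1 + 1) := by
    intro j hj
    have h1 : 2 * j + 2 ≤ 2 * (k * p) := by omega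
    have h2 : (2 * k + 1) * p ≤ p ^ (n + 1) * p := Nat.mul_le_mul_right p hk
    have h3 : p ^ (n + 1 + 1) = p ^ (n + 1) * p := pow_succ p (n + 1)
    nlinarith [hp.two_le]
  have h4f : ∀ j : ℕ, f j = 4 / ((2 * j + 1 : ℕ) : ℚ) ^ 2 := by
    intro j
    have hj0 : ((j : ℚ) + 1/2) ≠ 0 := by positivity
    simp only [hf]
    rw [div_eq_div_iff (by positivity) (by positivity)]
    push_cast
    ring
  have hG : ∀ j : ℕ, j < k * p → IsPInt p ((p : ℚ) ^ (2 * (n + 1)) * f j) := by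
    intro j hj
    have : (p : ℚ) ^ (2 * (n + 1)) * f j
        = (4 : ℤ) * ((p : ℚ) ^ (2 * (n + 1)) / ((2 * j + 1 : ℕ) : ℚ) ^ 2) := by
      rw [h4f j]; push_cast; ring
    rw [this]
    exact IsPIntAux.mul hp (IsPIntAux.intCast hp 4)
      (IsPIntAux.key hp (by omega) (hbound j hj))
  -- the final p-integrality argument
  have hterm : ∀ T ∈ P \ B, ∃ r : ℚ, IsPInt p r ∧
      (p : ℚ) ^ (2 * s * (n + 1)) * F T = (p : ℚ) ^ (n + 1) * r := by
    intro T hT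
    rw [Finset.mem_sdiff] at hT
    obtain ⟨hTP, hTB⟩ := hT
    rw [hP, Finset.mem_powersetCard] at hTP
    obtain ⟨hTsub, hTcard⟩ := hTP
    have hTj : ∀ j ∈ T, j < k * p := fun j hj => Finset.mem_range.mp (hTsub hj)
    -- find a bad element
    have : ¬ T ⊆ (Finset.range k).map e := by
      intro h
      exact hTB (by rw [hB, Finset.mem_powersetCard]; exact ⟨h, hTcard⟩)
    obtain ⟨j₀, hj₀T, hj₀notin⟩ := Finset.not_subset.mp this
    have hj₀lt : j₀ < k * p := hTj j₀ hj₀T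
    have hnd : ¬ p ∣ (2 * j₀ + 1) := by
      rintro ⟨c, hc⟩
      have hodd : Odd (p * c) := hc ▸ ⟨j₀, by ring⟩
      obtain ⟨m, rfl⟩ := (Nat.odd_mul.mp hodd).2
      have hkey : p * (2 * m + 1) = 2 * (p * m + t) + 1 := by rw [hpt]; ring
      have hj₀ : j₀ = p * m + t := by omega
      apply hj₀notin
      simp only [Finset.mem_map, Finset.mem_range, he, Function.Embedding.coeFn_mk]
      refine ⟨m, ?_, hj₀.symm⟩
      have h1 : p * m + t < p * k := by rw [Nat.mul_comm p k]; omega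
      have h2 : p * m < p * k := by omega
      exact Nat.lt_of_mul_lt_mul_left h2
    -- rewrite the term as a product
    have hprod : (p : ℚ) ^ (2 * s * (n + 1)) * F T
        = ∏ j ∈ T, ((p : ℚ) ^ (2 * (n + 1)) * f j) := by
      rw [Finset.prod_mul_distrib, Finset.prod_const, hTcard, ← pow_mul,
        show 2 * (n + 1) * s = 2 * s * (n + 1) by ring]
    have hsplit2 : ∏ j ∈ T, ((p : ℚ) ^ (2 * (n + 1)) * f j)
        = ((p : ℚ) ^ (2 * (n + 1)) * f j₀)
          * ∏ j ∈ T.erase j₀, ((p : ℚ) ^ (2 * (n + 1)) * f j) :=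
      (Finset.mul_prod_erase T _ hj₀T).symm
    -- j₀ factor
    have hne : ((2 * j₀ + 1 : ℕ) : ℚ) ≠ 0 := by positivity
    have hr₀pint : IsPInt p (4 * (p : ℚ) ^ (n + 1) / ((2 * j₀ + 1 : ℕ) : ℚ) ^ 2) := by
      refine ⟨4 * (p : ℤ) ^ (n + 1), ((2 * j₀ + 1 : ℕ) : ℤ) ^ 2, ?_, by push_cast; ring⟩
      intro h
      have h1 : (p : ℤ) ∣ ((2 * j₀ + 1 : ℕ) : ℤ) :=
        (Nat.prime_iff_prime_int.mp hp).dvd_of_dvd_pow h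
      exact hnd (by exact_mod_cast h1)
    have hj₀eq : (p : ℚ) ^ (2 * (n + 1)) * f j₀
        = (p : ℚ) ^ (n + 1) * (4 * (p : ℚ) ^ (n + 1) / ((2 * j₀ + 1 : ℕ) : ℚ) ^ 2) := by
      rw [h4f j₀, show 2 * (n + 1) = (n + 1) + (n + 1) by ring, pow_add]
      field_simp
    refine ⟨(4 * (p : ℚ) ^ (n + 1) / ((2 * j₀ + 1 : ℕ) : ℚ) ^ 2)
      * ∏ j ∈ T.erase j₀, ((p : ℚ) ^ (2 * (n + 1)) * f j), ?_, ?_⟩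
    · exact IsPIntAux.mul hp hr₀pint
        (IsPIntAux.prod hp fun j hj => hG j (hTj j (Finset.mem_of_mem_erase hj)))
    · rw [hprod, hsplit2, hj₀eq]; ring
  -- sum up
  have hsum : ∃ r : ℚ, IsPInt p r ∧
      (-1 : ℚ) ^ s * ∑ T ∈ P \ B, (p : ℚ) ^ (2 * s * (n + 1)) * F T = (p : ℚ) ^ (n + 1) * r := by
    have := Finset.sum_induction (fun T => (p : ℚ) ^ (2 * s * (n + 1)) * F T)
      (fun x => ∃ r : ℚ, IsPInt p r ∧ x = (p : ℚ) ^ (n + 1) * r)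
      (fun a b ⟨r1, h1, e1⟩ ⟨r2, h2, e2⟩ =>
        ⟨r1 + r2, IsPIntAux.add hp h1 h2, by rw [e1, e2]; ring⟩)
      ⟨0, IsPIntAux.zero hp, by ring⟩ hterm
    obtain ⟨r, hr, herq⟩ := this
    exact ⟨(-1) ^ s * r, IsPIntAux.mul hp (by
        simpa using IsPIntAux.intCast hp ((-1) ^ s)) hr, by rw [herq]; ring⟩
  obtain ⟨r, ⟨u, v, hv, rfl⟩, hr⟩ := hsum
  exact ⟨u, v, hv, by rw [hdiff, hr, mul_div_assoc]⟩
end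

section
/- For an odd prime p, a positive integer n, and positive integers m, j, the congruence C(−1/2, pj)² · C(m p^n, pj) ≡ C(−1/2, j)² · C(m p^{n−1}, j) (mod p^n) holds; moreover, if p does not divide j then C(m p^n, j) ≡ 0 (mod p^n). -/
open Finset

private lemma prodIccRange {M : Type*} [CommMonoid M] (f : ℕ → M) (k : ℕ) :
    ∏ i ∈ Icc 1 k, f i = ∏ i ∈ range k, f (i + 1) := by
  refine Finset.prod_nbij' (fun a => a - 1) (fun b => b + 1) ?_ ?_ ?_ ?_ ?_
  · intro a ha; simp only [mem_Icc, mem_range] at *; omega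
  · intro a ha; simp only [mem_Icc, mem_range] at *; omega
  · intro a ha; simp only [mem_Icc] at ha; omega
  · intro a _; rfl
  · intro a ha; simp only [mem_Icc] at ha; congr 1; omega

private lemma factChooseProd (N k : ℕ) (h : k ≤ N) :
    ((k.factorial : ℤ) * N.choose k) = ∏ i ∈ Icc 1 k, ((N : ℤ) - k + i) := by
  have h1 : ((N.descFactorial k : ℕ) : ℤ) = ∏ i ∈ range k, ((N : ℤ) - i) := by
    rw [Nat.descFactorial_eq_prod_range, Nat.cast_prod]
    refine Finset.prod_congr rfl fun i hi => ?_
    simp only [mem_range] at hi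
    omega
  rw [Nat.descFactorial_eq_factorial_mul_choose] at h1
  push_cast at h1
  rw [h1, prodIccRange (fun i => (N : ℤ) - k + i) k,
    ← Finset.prod_range_reflect (fun i => (N : ℤ) - i) k]
  refine Finset.prod_congr rfl fun i hi => ?_
  simp only [mem_range] at hi
  show (N : ℤ) - ((k - 1 - i : ℕ) : ℤ) = (N : ℤ) - k + ((i : ℤ) + 1)
  omega

private lemma prodModEq {c : ℤ} (s : Finset ℕ) (f g : ℕ → ℤ)
    (h : ∀ i ∈ s, f i ≡ g i [ZMOD c]) :
    (∏ i ∈ s, f i) ≡ (∏ i ∈ s, g i) [ZMOD c] := by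
  classical
  induction s using Finset.induction_on with
  | empty => simp
  | insert a s' hx ih =>
    rw [Finset.prod_insert hx, Finset.prod_insert hx]
    exact (h a (mem_insert_self a s')).mul (ih fun i hi => h i (mem_insert_of_mem hi))

private lemma prodSplit (p j : ℕ) (hp : 0 < p) (f : ℕ → ℤ) :
    ∏ i ∈ Icc 1 (p * j), f i =
      (∏ i ∈ (Icc 1 (p * j)).filter (fun i => ¬ p ∣ i), f i) * ∏ t ∈ Icc 1 j, f (p * t) := by
  rw [← Finset.prod_filter_mul_prod_filter_not (Icc 1 (p * j)) (fun i => ¬ p ∣ i) f]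
  congr 1
  refine Finset.prod_nbij' (fun i => i / p) (fun t => p * t) ?_ ?_ ?_ ?_ ?_
  · intro a ha
    simp only [mem_filter, mem_Icc, not_not] at ha
    obtain ⟨⟨h1, h2⟩, c, rfl⟩ := ha
    have hc : 0 < c := by
      rcases Nat.eq_zero_or_pos c with rfl | hc
      · simp at h1
      · exact hc
    simp only [mem_Icc]
    rw [Nat.mul_div_cancel_left _ hp]
    exact ⟨hc, Nat.le_of_mul_le_mul_left h2 hp⟩
  · intro t ht
    simp only [mem_Icc] at ht
    simp only [mem_filter, mem_Icc, not_not]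
    refine ⟨⟨?_, Nat.mul_le_mul_left p ht.2⟩, dvd_mul_right p t⟩
    have := Nat.mul_le_mul hp ht.1
    omega
  · intro a ha
    simp only [mem_filter, not_not] at ha
    exact Nat.mul_div_cancel' ha.2
  · intro t _
    exact Nat.mul_div_cancel_left t hp
  · intro a ha
    simp only [mem_filter, not_not] at ha
    rw [Nat.mul_div_cancel' ha.2]

private lemma negHalf_prod (k : ℕ) :
    (∏ i ∈ range k, (-1/2 - (i : ℚ))) =
      (-1) ^ k * ((2 * k).factorial : ℚ) / (4 ^ k * (k.factorial : ℚ)) := by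
  induction k with
  | zero => simp
  | succ k ih =>
    rw [prod_range_succ, ih]
    have h1 : ((2 * (k + 1)).factorial : ℚ)
        = ((2 * k : ℕ) + 2) * (((2 * k : ℕ) + 1) * ((2 * k).factorial : ℚ)) := by
      have h2 : 2 * (k + 1) = (2 * k + 1) + 1 := by ring
      rw [h2, Nat.factorial_succ, Nat.factorial_succ]
      push_cast
      ring
    rw [h1, Nat.factorial_succ]
    have hf : ((k.factorial : ℚ)) ≠ 0 := Nat.cast_ne_zero.mpr k.factorial_ne_zero
    have h4 : (4 : ℚ) ^ k ≠ 0 := by positivity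
    field_simp
    push_cast
    ring

private lemma negHalfChoose_sq (k : ℕ) :
    (negHalfChoose k) ^ 2 = (((2 * k).choose k : ℚ)) ^ 2 / 16 ^ k := by
  have hch : (((2 * k).choose k : ℚ)) * (k.factorial : ℚ) * (k.factorial : ℚ)
      = ((2 * k).factorial : ℚ) := by
    have h := Nat.choose_mul_factorial_mul_factorial (by omega : k ≤ 2 * k)
    rw [show 2 * k - k = k by omega] at h
    exact_mod_cast congrArg (Nat.cast : ℕ → ℚ) h
  have hf : ((k.factorial : ℚ)) ≠ 0 := Nat.cast_ne_zero.mpr k.factorial_ne_zero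
  have h4 : (4 : ℚ) ^ k ≠ 0 := by positivity
  have h16 : (16 : ℚ) ^ k ≠ 0 := by positivity
  have hsq : ((-1 : ℚ) ^ k) ^ 2 = 1 := by
    rw [← pow_mul, mul_comm k 2, pow_mul]
    norm_num
  have h416 : ((4 : ℚ) ^ k) ^ 2 = 16 ^ k := by
    rw [← pow_mul, mul_comm k 2, pow_mul]
    norm_num
  rw [negHalfChoose, negHalf_prod, eq_div_iff h16]
  rw [eq_comm, ← hch]
  field_simp
  rw [hsq, h416]
  ring

/-- For an odd prime `p` and positive integers `n, m, j`:
`C(−1/2, pj)² C(mpⁿ, pj) ≡ C(−1/2, j)² C(mpⁿ⁻¹, j) (mod pⁿ)` as rationals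
(the difference is `0` or has `p`-adic valuation at least `n`); moreover if `p ∤ j` then
`pⁿ ∣ C(mpⁿ, j)`. -/
theorem stmt11 (p : ℕ) (hp : p.Prime) (hodd : Odd p) (n m j : ℕ)
    (hn : 1 ≤ n) (hm : 1 ≤ m) (hj : 1 ≤ j) :
    ((negHalfChoose (p * j)) ^ 2 * ((m * p ^ n).choose (p * j) : ℚ)
        = (negHalfChoose j) ^ 2 * ((m * p ^ (n - 1)).choose j : ℚ) ∨
      (n : ℤ) ≤ padicValRat p ((negHalfChoose (p * j)) ^ 2 * ((m * p ^ n).choose (p * j) : ℚ)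
        - (negHalfChoose j) ^ 2 * ((m * p ^ (n - 1)).choose j : ℚ))) ∧
    (¬ p ∣ j → p ^ n ∣ (m * p ^ n).choose j) := by
  haveI : Fact p.Prime := ⟨hp⟩
  have hp0 : 0 < p := hp.pos
  have hp2 : 2 ≤ p := hp.two_le
  have hchooseId : ∀ N k : ℕ, 1 ≤ N → 1 ≤ k →
      N * (N - 1).choose (k - 1) = N.choose k * k := by
    intro N k hN hk
    have h := Nat.add_one_mul_choose_eq (N - 1) (k - 1)
    rw [show N - 1 + 1 = N by omega, show k - 1 + 1 = k by omega] at h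
    exact h
  have part2 : ¬ p ∣ j → p ^ n ∣ (m * p ^ n).choose j := by
    intro hpj
    have hN1 : 1 ≤ m * p ^ n := Nat.one_le_iff_ne_zero.mpr (by positivity)
    have hid := hchooseId (m * p ^ n) j hN1 hj
    have hdvd : p ^ n ∣ (m * p ^ n).choose j * j := by
      rw [← hid]
      exact Dvd.dvd.mul_right (dvd_mul_left _ m) _
    exact (Nat.Coprime.pow_left n ((Nat.Prime.coprime_iff_not_dvd hp).mpr hpj)).dvd_of_dvd_mul_right
      hdvd
  refine ⟨?_, part2⟩
  -- trivial case : p * j > m * p ^ n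
  have hpow : p ^ n = p * p ^ (n - 1) := by
    conv_lhs => rw [show n = n - 1 + 1 by omega]
    rw [pow_succ]
    ring
  have hN1N0 : m * p ^ n = p * (m * p ^ (n - 1)) := by rw [hpow]; ring
  by_cases hPN : p * j ≤ m * p ^ n
  swap
  · left
    have h1 : m * p ^ n < p * j := by omega
    have h2 : m * p ^ (n - 1) < j := by
      rw [hN1N0] at h1
      exact lt_of_mul_lt_mul_left h1 (by omega)
    rw [Nat.choose_eq_zero_of_lt h1, Nat.choose_eq_zero_of_lt h2]
    push_cast
    ring
  -- main case
  have hjN0 : j ≤ m * p ^ (n - 1) := by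
    have : p * j ≤ p * (m * p ^ (n - 1)) := by omega
    exact Nat.le_of_mul_le_mul_left this hp0
  set S : Finset ℕ := (Finset.Icc 1 (p * j)).filter (fun i => ¬ p ∣ i) with hS
  have hmemS : ∀ i ∈ S, 1 ≤ i ∧ i ≤ p * j ∧ ¬ p ∣ i := by
    intro i hi
    rw [hS, mem_filter, mem_Icc] at hi
    exact ⟨hi.1.1, hi.1.2, hi.2⟩
  set D : ℤ := ∏ i ∈ S, (i : ℤ) with hD
  set A1 : ℤ := ∏ i ∈ S, (((p * j : ℕ) : ℤ) + (i : ℤ)) with hA1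
  set A2 : ℤ := ∏ i ∈ S, (((m * p ^ n : ℕ) : ℤ) - ((p * j : ℕ) : ℤ) + (i : ℤ)) with hA2
  -- factorial of p*j as a product
  have hfacN : ∀ k : ℕ, (∏ i ∈ Icc 1 k, (i : ℤ)) = (k.factorial : ℤ) := by
    intro k
    rw [prodIccRange (fun i => (i : ℤ)) k]
    rw [show ((k.factorial : ℕ) : ℤ) = ((∏ i ∈ range k, (i + 1) : ℕ) : ℤ) by
      rw [Finset.prod_range_add_one_eq_factorial]]
    push_cast
    rfl
  have hfacP : ((p * j).factorial : ℤ) = D * ((p : ℤ) ^ j * (j.factorial : ℤ)) := by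
    rw [← hfacN (p * j), prodSplit p j hp0 (fun i => (i : ℤ)), ← hD]
    congr 1
    calc (∏ t ∈ Icc 1 j, ((p * t : ℕ) : ℤ))
        = ∏ t ∈ Icc 1 j, ((p : ℤ) * (t : ℤ)) := by
          refine Finset.prod_congr rfl fun t _ => ?_
          push_cast; ring
      _ = (∏ _t ∈ Icc 1 j, (p : ℤ)) * ∏ t ∈ Icc 1 j, (t : ℤ) := Finset.prod_mul_distrib
      _ = (p : ℤ) ^ j * (j.factorial : ℤ) := by
          rw [Finset.prod_const, Nat.card_Icc, hfacN j]
          norm_num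
  have hpjfacne : (p : ℤ) ^ j * (j.factorial : ℤ) ≠ 0 := by positivity
  -- key product identity for central binomial
  have hL2 : D * (((2 * (p * j)).choose (p * j) : ℕ) : ℤ)
      = (((2 * j).choose j : ℕ) : ℤ) * A1 := by
    have e1 : (((p * j).factorial : ℕ) : ℤ) * (((2 * (p * j)).choose (p * j) : ℕ) : ℤ)
        = ∏ i ∈ Icc 1 (p * j), (((p * j : ℕ) : ℤ) + (i : ℤ)) := by
      rw [factChooseProd (2 * (p * j)) (p * j) (by omega)]
      refine Finset.prod_congr rfl fun i _ => ?_
      push_cast; ring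
    have e2 : ((j.factorial : ℕ) : ℤ) * (((2 * j).choose j : ℕ) : ℤ)
        = ∏ t ∈ Icc 1 j, ((j : ℤ) + (t : ℤ)) := by
      rw [factChooseProd (2 * j) j (by omega)]
      refine Finset.prod_congr rfl fun t _ => ?_
      push_cast; ring
    have e3 : ∏ t ∈ Icc 1 j, (((p * j : ℕ) : ℤ) + ((p * t : ℕ) : ℤ))
        = (p : ℤ) ^ j * ∏ t ∈ Icc 1 j, ((j : ℤ) + (t : ℤ)) := by
      calc ∏ t ∈ Icc 1 j, (((p * j : ℕ) : ℤ) + ((p * t : ℕ) : ℤ))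
          = ∏ t ∈ Icc 1 j, ((p : ℤ) * ((j : ℤ) + (t : ℤ))) := by
            refine Finset.prod_congr rfl fun t _ => ?_
            push_cast; ring
        _ = (∏ _t ∈ Icc 1 j, (p : ℤ)) * ∏ t ∈ Icc 1 j, ((j : ℤ) + (t : ℤ)) :=
            Finset.prod_mul_distrib
        _ = _ := by rw [Finset.prod_const, Nat.card_Icc]; norm_num
    have e4 := e1
    rw [prodSplit p j hp0 (fun i => ((p * j : ℕ) : ℤ) + (i : ℤ)), ← hA1, e3, ← e2] at e4
    rw [hfacP] at e4
    apply mul_left_cancel₀ hpjfacne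
    calc ((p : ℤ) ^ j * (j.factorial : ℤ)) * (D * (((2 * (p * j)).choose (p * j) : ℕ) : ℤ))
        = D * ((p : ℤ) ^ j * (j.factorial : ℤ)) * (((2 * (p * j)).choose (p * j) : ℕ) : ℤ) := by
          ring
      _ = A1 * ((p : ℤ) ^ j * ((j.factorial : ℤ) * (((2 * j).choose j : ℕ) : ℤ))) := e4
      _ = _ := by ring
  -- key product identity for the other binomial
  have hL3 : D * (((m * p ^ n).choose (p * j) : ℕ) : ℤ)
      = (((m * p ^ (n - 1)).choose j : ℕ) : ℤ) * A2 := by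
    have e1 : (((p * j).factorial : ℕ) : ℤ) * (((m * p ^ n).choose (p * j) : ℕ) : ℤ)
        = ∏ i ∈ Icc 1 (p * j), (((m * p ^ n : ℕ) : ℤ) - ((p * j : ℕ) : ℤ) + (i : ℤ)) := by
      rw [factChooseProd (m * p ^ n) (p * j) hPN]
    have e2 : ((j.factorial : ℕ) : ℤ) * (((m * p ^ (n - 1)).choose j : ℕ) : ℤ)
        = ∏ t ∈ Icc 1 j, (((m * p ^ (n - 1) : ℕ) : ℤ) - (j : ℤ) + (t : ℤ)) := by
      rw [factChooseProd (m * p ^ (n - 1)) j hjN0]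
    have e3 : ∏ t ∈ Icc 1 j, (((m * p ^ n : ℕ) : ℤ) - ((p * j : ℕ) : ℤ) + ((p * t : ℕ) : ℤ))
        = (p : ℤ) ^ j * ∏ t ∈ Icc 1 j, (((m * p ^ (n - 1) : ℕ) : ℤ) - (j : ℤ) + (t : ℤ)) := by
      calc ∏ t ∈ Icc 1 j, (((m * p ^ n : ℕ) : ℤ) - ((p * j : ℕ) : ℤ) + ((p * t : ℕ) : ℤ))
          = ∏ t ∈ Icc 1 j, ((p : ℤ) * (((m * p ^ (n - 1) : ℕ) : ℤ) - (j : ℤ) + (t : ℤ))) := by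
            refine Finset.prod_congr rfl fun t _ => ?_
            have : ((m * p ^ n : ℕ) : ℤ) = (p : ℤ) * ((m * p ^ (n - 1) : ℕ) : ℤ) := by
              rw [hN1N0]; push_cast; ring
            rw [this]; push_cast; ring
        _ = (∏ _t ∈ Icc 1 j, (p : ℤ)) *
            ∏ t ∈ Icc 1 j, (((m * p ^ (n - 1) : ℕ) : ℤ) - (j : ℤ) + (t : ℤ)) :=
            Finset.prod_mul_distrib
        _ = _ := by rw [Finset.prod_const, Nat.card_Icc]; norm_num
    have e4 := e1
    rw [prodSplit p j hp0 (fun i => ((m * p ^ n : ℕ) : ℤ) - ((p * j : ℕ) : ℤ) + (i : ℤ)),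
      ← hA2, e3, ← e2] at e4
    rw [hfacP] at e4
    apply mul_left_cancel₀ hpjfacne
    calc ((p : ℤ) ^ j * (j.factorial : ℤ)) * (D * (((m * p ^ n).choose (p * j) : ℕ) : ℤ))
        = D * ((p : ℤ) ^ j * (j.factorial : ℤ)) * (((m * p ^ n).choose (p * j) : ℕ) : ℤ) := by
          ring
      _ = A2 * ((p : ℤ) ^ j * ((j.factorial : ℤ) * (((m * p ^ (n - 1)).choose j : ℕ) : ℤ))) := e4
      _ = _ := by ring
  -- D is a p-adic unit
  have hDpos : 0 < D := by
    rw [hD]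
    refine Finset.prod_pos fun i hi => ?_
    have := (hmemS i hi).1
    positivity
  have hDne : D ≠ 0 := ne_of_gt hDpos
  have hpZ : Prime (p : ℤ) := Nat.prime_iff_prime_int.mp hp
  have hpD : ¬ (p : ℤ) ∣ D := by
    intro hdvd
    rw [hD, Prime.dvd_finset_prod_iff hpZ] at hdvd
    obtain ⟨i, hi, hpi⟩ := hdvd
    exact (hmemS i hi).2.2 (Int.natCast_dvd_natCast.mp hpi)
  -- congruence : A1 ≡ D mod p*j
  have hA1D : A1 ≡ D [ZMOD ((p * j : ℕ) : ℤ)] := by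
    rw [hA1, hD]
    refine prodModEq S _ _ fun i hi => ?_
    exact Int.ModEq.symm (Int.modEq_iff_dvd.mpr ⟨1, by ring⟩)
  -- congruence : A2 ≡ D mod p^n
  have hswap : (∏ i ∈ S, (((p * j : ℕ) : ℤ) - (i : ℤ))) = D := by
    rw [hD]
    refine Finset.prod_nbij' (fun a => p * j - a) (fun a => p * j - a) ?_ ?_ ?_ ?_ ?_
    · intro a ha
      obtain ⟨h1, h2, h3⟩ := hmemS a ha
      have halt : a < p * j := by
        rcases Nat.lt_or_ge a (p * j) with h | h
        · exact h
        · exfalso; exact h3 (by rw [show a = p * j by omega]; exact dvd_mul_right p j)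
      simp only [hS, mem_filter, mem_Icc]
      refine ⟨⟨by omega, by omega⟩, fun hd => h3 ?_⟩
      have h5 : p ∣ p * j - (p * j - a) := Nat.dvd_sub (dvd_mul_right p j) hd
      rwa [show p * j - (p * j - a) = a by omega] at h5
    · intro a ha
      obtain ⟨h1, h2, h3⟩ := hmemS a ha
      have halt : a < p * j := by
        rcases Nat.lt_or_ge a (p * j) with h | h
        · exact h
        · exfalso; exact h3 (by rw [show a = p * j by omega]; exact dvd_mul_right p j)
      simp only [hS, mem_filter, mem_Icc]
      refine ⟨⟨by omega, by omega⟩, fun hd => h3 ?_⟩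
      have h5 : p ∣ p * j - (p * j - a) := Nat.dvd_sub (dvd_mul_right p j) hd
      rwa [show p * j - (p * j - a) = a by omega] at h5
    · intro a ha
      have := (hmemS a ha).2.1
      omega
    · intro a ha
      have := (hmemS a ha).2.1
      omega
    · intro a ha
      have := (hmemS a ha).2.1
      omega
  have hcardT : ((Finset.Icc 1 (p * j)).filter (fun i => p ∣ i)).card = j := by
    have himg : ((Finset.Icc 1 (p * j)).filter (fun i => p ∣ i))
        = (Finset.Icc 1 j).image (fun t => p * t) := by
      ext x
      simp only [mem_filter, mem_Icc, Finset.mem_image]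
      constructor
      · rintro ⟨⟨h1, h2⟩, c, rfl⟩
        refine ⟨c, ⟨?_, Nat.le_of_mul_le_mul_left h2 hp0⟩, rfl⟩
        rcases Nat.eq_zero_or_pos c with rfl | hc
        · simp at h1
        · exact hc
      · rintro ⟨t, ⟨h1, h2⟩, rfl⟩
        have := Nat.mul_le_mul hp0 h1
        exact ⟨⟨by omega, Nat.mul_le_mul_left p h2⟩, dvd_mul_right p t⟩
    rw [himg, Finset.card_image_of_injective _ (fun a b hab => by
      exact Nat.eq_of_mul_eq_mul_left hp0 hab), Nat.card_Icc]
    omega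
  have hcardS : S.card = p * j - j := by
    have h := Finset.card_filter_add_card_filter_not
      (s := Finset.Icc 1 (p * j)) (fun i => p ∣ i)
    rw [Nat.card_Icc] at h
    have : S.card = ((Finset.Icc 1 (p * j)).filter (fun i => ¬ p ∣ i)).card := by rw [hS]
    omega
  have hEvenS : Even S.card := by
    rw [hcardS, show p * j - j = (p - 1) * j by
      rw [Nat.sub_mul, one_mul]]
    exact (Nat.Odd.sub_odd hodd odd_one).mul_right j
  have hA3D : (∏ i ∈ S, ((i : ℤ) - ((p * j : ℕ) : ℤ))) = D := by
    calc (∏ i ∈ S, ((i : ℤ) - ((p * j : ℕ) : ℤ)))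
        = ∏ i ∈ S, ((-1 : ℤ) * (((p * j : ℕ) : ℤ) - (i : ℤ))) := by
          refine Finset.prod_congr rfl fun i _ => by ring
      _ = (∏ _i ∈ S, (-1 : ℤ)) * ∏ i ∈ S, (((p * j : ℕ) : ℤ) - (i : ℤ)) :=
          Finset.prod_mul_distrib
      _ = D := by
          rw [Finset.prod_const, hswap, Even.neg_one_pow hEvenS, one_mul]
  have hA2D : A2 ≡ D [ZMOD ((p : ℤ) ^ n)] := by
    rw [hA2, ← hA3D]
    refine prodModEq S _ _ fun i hi => ?_
    refine Int.ModEq.symm (Int.modEq_iff_dvd.mpr ⟨(m : ℤ), ?_⟩)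
    push_cast
    ring
  -- Fermat : p ∣ 16^(p-1) - 1
  have hp16 : ¬ p ∣ 16 := by
    intro h
    have h16 : (16 : ℕ) = 2 ^ 4 := by norm_num
    rw [h16] at h
    have h2 : p = 2 := (Nat.prime_dvd_prime_iff_eq hp Nat.prime_two).mp (hp.dvd_of_dvd_pow h)
    rw [h2] at hodd
    simp [Nat.odd_iff] at hodd
  have hFermat : (p : ℤ) ∣ (16 : ℤ) ^ (p - 1) - 1 := by
    have h16ne : (16 : ZMod p) ≠ 0 := by
      have : ((16 : ℕ) : ZMod p) ≠ 0 := by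
        rw [Ne, ZMod.natCast_eq_zero_iff]
        exact hp16
      simpa using this
    have hzero : (((16 : ℤ) ^ (p - 1) - 1 : ℤ) : ZMod p) = 0 := by
      push_cast
      rw [ZMod.pow_card_sub_one_eq_one h16ne]
      ring
    exact_mod_cast (ZMod.intCast_zmod_eq_zero_iff_dvd _ p).mp hzero
  set e : ℕ := padicValNat p j with he
  obtain ⟨j', hj'⟩ := pow_padicValNat_dvd (p := p) (n := j)
  have hpj' : ¬ p ∣ j' := by
    intro hd
    have h1 : p ^ (e + 1) ∣ j := by
      rw [hj', pow_succ]
      exact mul_dvd_mul_left _ hd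
    rcases (padicValNat_dvd_iff (e + 1) j).mp h1 with h | h
    · omega
    · omega
  have h16e : (p : ℤ) ^ (e + 1) ∣ (16 : ℤ) ^ ((p - 1) * j) - 1 := by
    have hsub := dvd_sub_pow_of_dvd_sub (R := ℤ) (p := p)
      (a := (16 : ℤ) ^ (p - 1)) (b := 1) hFermat e
    have hgeom : ((16 : ℤ) ^ (p - 1)) ^ (p ^ e) - 1 ∣ (16 : ℤ) ^ ((p - 1) * j) - 1 := by
      have : (16 : ℤ) ^ ((p - 1) * j) = (((16 : ℤ) ^ (p - 1)) ^ (p ^ e)) ^ j' := by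
        rw [← pow_mul, ← pow_mul, hj']
      rw [this]
      have := sub_dvd_pow_sub_pow (((16 : ℤ) ^ (p - 1)) ^ (p ^ e)) 1 j'
      simpa using this
    rw [one_pow] at hsub
    exact dvd_trans hsub hgeom
  -- combine the congruences
  set w : ℕ := (p - 1) * j with hw
  set E : ℤ := A1 ^ 2 * A2 - D ^ 3 * 16 ^ w with hE
  set k0 : ℕ := min n (e + 1) with hk0
  have hck0A1 : A1 ≡ D [ZMOD ((p : ℤ) ^ k0)] := by
    refine Int.ModEq.of_dvd ?_ hA1D
    have h1 : (p : ℤ) ^ k0 ∣ (p : ℤ) ^ (e + 1) := pow_dvd_pow _ (min_le_right n (e + 1))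
    have h2 : (p : ℤ) ^ (e + 1) ∣ ((p * j : ℕ) : ℤ) := by
      have : p ^ (e + 1) ∣ p * j := by
        rw [hj', pow_succ, mul_comm (p ^ e) p, mul_dvd_mul_iff_left (by positivity : p ≠ 0)]
        exact Dvd.intro j' rfl
      exact_mod_cast Int.natCast_dvd_natCast.mpr this
    exact dvd_trans h1 h2
  have hck0A2 : A2 ≡ D [ZMOD ((p : ℤ) ^ k0)] :=
    Int.ModEq.of_dvd (pow_dvd_pow _ (min_le_left n (e + 1))) hA2D
  have hck016 : (16 : ℤ) ^ w ≡ 1 [ZMOD ((p : ℤ) ^ k0)] := by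
    refine Int.ModEq.of_dvd (pow_dvd_pow _ (min_le_right n (e + 1))) ?_
    exact Int.ModEq.symm (Int.modEq_iff_dvd.mpr (by simpa using h16e))
  have hEdvd : (p : ℤ) ^ k0 ∣ E := by
    have hX : A1 ^ 2 * A2 ≡ D ^ 3 * (16 : ℤ) ^ w [ZMOD ((p : ℤ) ^ k0)] := by
      calc A1 ^ 2 * A2 ≡ D ^ 2 * D [ZMOD ((p : ℤ) ^ k0)] := (hck0A1.pow 2).mul hck0A2
        _ = D ^ 3 * 1 := by ring
        _ ≡ D ^ 3 * (16 : ℤ) ^ w [ZMOD ((p : ℤ) ^ k0)] :=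
          ((Int.ModEq.refl (D ^ 3)).mul hck016).symm
    exact hX.symm.dvd
  -- divisibility of the binomial coefficient
  have hnumdvd : (p : ℤ) ^ n ∣ (((m * p ^ (n - 1)).choose j : ℕ) : ℤ) * E := by
    rcases le_or_gt n (e + 1) with hne | hne
    · have : k0 = n := min_eq_left hne
      rw [this] at hEdvd
      exact Dvd.dvd.mul_left hEdvd _
    · have hk0e : k0 = e + 1 := min_eq_right (by omega)
      have hN0pos : 1 ≤ m * p ^ (n - 1) := Nat.one_le_iff_ne_zero.mpr (by positivity)
      have hCj : p ^ (n - 1) ∣ (m * p ^ (n - 1)).choose j * j := by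
        rw [← hchooseId (m * p ^ (n - 1)) j hN0pos hj]
        exact Dvd.dvd.mul_right (dvd_mul_left _ m) _
      have hCj2 : p ^ (n - 1 - e) ∣ (m * p ^ (n - 1)).choose j * j' := by
        have h1 : p ^ e * p ^ (n - 1 - e) ∣ p ^ e * ((m * p ^ (n - 1)).choose j * j') := by
          rw [← pow_add, show e + (n - 1 - e) = n - 1 by omega]
          rw [show p ^ e * ((m * p ^ (n - 1)).choose j * j')
            = (m * p ^ (n - 1)).choose j * (p ^ e * j') by ring, ← hj']
          exact hCj
        exact (Nat.mul_dvd_mul_iff_left (by positivity : 0 < p ^ e)).mp h1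
      have hCdvd : p ^ (n - 1 - e) ∣ (m * p ^ (n - 1)).choose j :=
        (Nat.Coprime.pow_left _ ((Nat.Prime.coprime_iff_not_dvd hp).mpr
          hpj')).dvd_of_dvd_mul_right hCj2
      have hsplitn : (p : ℤ) ^ n = (p : ℤ) ^ (n - 1 - e) * (p : ℤ) ^ (e + 1) := by
        rw [← pow_add]
        congr 1
        omega
      rw [hsplitn]
      refine mul_dvd_mul ?_ (hk0e ▸ hEdvd)
      have := Int.natCast_dvd_natCast.mpr hCdvd
      push_cast at this
      exact this
  -- rational identity
  have hDQne : ((D : ℚ)) ≠ 0 := Int.cast_ne_zero.mpr hDne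
  have h16split : (16 : ℚ) ^ (p * j) = 16 ^ j * 16 ^ w := by
    rw [← pow_add]
    congr 1
    rw [hw]
    have h1 : 1 + (p - 1) = p := by omega
    calc p * j = (1 + (p - 1)) * j := by rw [h1]
      _ = j + (p - 1) * j := by ring
  have hQ2 : (((2 * (p * j)).choose (p * j) : ℕ) : ℚ)
      = (((2 * j).choose j : ℕ) : ℚ) * (A1 : ℚ) / (D : ℚ) := by
    rw [eq_div_iff hDQne]
    have := congrArg (fun z : ℤ => (z : ℚ)) hL2
    push_cast at this ⊢
    linarith
  have hQ3 : (((m * p ^ n).choose (p * j) : ℕ) : ℚ)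
      = (((m * p ^ (n - 1)).choose j : ℕ) : ℚ) * (A2 : ℚ) / (D : ℚ) := by
    rw [eq_div_iff hDQne]
    have := congrArg (fun z : ℤ => (z : ℚ)) hL3
    push_cast at this ⊢
    linarith
  set num : ℤ := (((2 * j).choose j : ℕ) : ℤ) ^ 2 * ((((m * p ^ (n - 1)).choose j : ℕ) : ℤ) * E)
    with hnum
  set den : ℤ := 16 ^ j * 16 ^ w * D ^ 3 with hden
  have hdiff : negHalfChoose (p * j) ^ 2 * (((m * p ^ n).choose (p * j) : ℕ) : ℚ)
      - negHalfChoose j ^ 2 * (((m * p ^ (n - 1)).choose j : ℕ) : ℚ)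
      = ((num : ℤ) : ℚ) / ((den : ℤ) : ℚ) := by
    rw [negHalfChoose_sq, negHalfChoose_sq, hQ2, hQ3, h16split, hnum, hden, hE]
    push_cast
    field_simp
  have hdenne : den ≠ 0 := by
    rw [hden]
    exact mul_ne_zero (mul_ne_zero (by positivity) (by positivity)) (pow_ne_zero _ hDne)
  by_cases hnum0 : num = 0
  · left
    have h0 : negHalfChoose (p * j) ^ 2 * (((m * p ^ n).choose (p * j) : ℕ) : ℚ)
        - negHalfChoose j ^ 2 * (((m * p ^ (n - 1)).choose j : ℕ) : ℚ) = 0 := by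
      rw [hdiff, hnum0]
      simp
    linarith [h0]
  · right
    rw [hdiff]
    have h1 : ((num : ℤ) : ℚ) ≠ 0 := Int.cast_ne_zero.mpr hnum0
    have h2 : ((den : ℤ) : ℚ) ≠ 0 := Int.cast_ne_zero.mpr hdenne
    rw [padicValRat.div h1 h2, padicValRat.of_int, padicValRat.of_int]
    have hp16Z : ¬ (p : ℤ) ∣ 16 := by
      intro h
      exact hp16 (by exact_mod_cast Int.natCast_dvd_natCast.mp (by exact_mod_cast h))
    have hpden : ¬ (p : ℤ) ∣ den := by
      intro h
      rw [hden] at h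
      rcases (hpZ.dvd_mul).mp h with h' | h'
      · rcases (hpZ.dvd_mul).mp h' with h'' | h''
        · exact hp16Z (hpZ.dvd_of_dvd_pow h'')
        · exact hp16Z (hpZ.dvd_of_dvd_pow h'')
      · exact hpD (hpZ.dvd_of_dvd_pow h')
    have hvden : padicValInt p den = 0 := padicValInt.eq_zero_of_not_dvd hpden
    have hvnum : n ≤ padicValInt p num := by
      have hd : (p : ℤ) ^ n ∣ num := by
        rw [hnum]
        exact Dvd.dvd.mul_left hnumdvd _
      rcases (padicValInt_dvd_iff n num).mp hd with h | h
      · exact absurd h hnum0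
      · exact h
    rw [hvden]
    omega
end

section
/- For every odd prime p, positive integers m, r with p ∤ m, 2j+1 = m p^r, 2j'+1 = p(2j+1), and every integer a with 0 ≤ a and every b with 0 ≤ b < p, the congruence C(m p^{r+1} − 1, a p + b) ≡ (−1)^b C(m p^r − 1, a) (mod p^{r+1}) holds. In particular, taking a = j and b = (p−1)/2 yields C(2j', j') ≡ (−1)^{(p−1)/2} C(2j, j) (mod p^{r+1}). -/
/-!
Write `C(Np - 1, k) k! = ∏_{0 < i ≤ k} (Np - i)` and split the factors according to whether
`p ∣ i`. The multiples `i = tp`, `t ≤ k / p`, give `p^(k/p) ∏ (N - t) = p^(k/p) (k/p)! C(N - 1, k/p)`,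
and in `k!` they give `p^(k/p) (k/p)!`, which cancels. When `p^r ∣ N`, every other factor
`Np - i` is `≡ -i (mod p^(r+1))` with `i` a unit, so
`C(Np - 1, k) ≡ (-1)^(k - k/p) C(N - 1, k/p)`. For odd `p` and `k = ap + b` the sign is `(-1)^b`;
the central binomial coefficients are the case `N = 2j + 1`, `k = j' = jp + (p - 1)/2`.
-/

open Finset Nat

lemma prod_range_add_one_eq_prod_Ioc {M : Type*} [CommMonoid M] (f : ℕ → M) (k : ℕ) :
    ∏ i ∈ range k, f (i + 1) = ∏ i ∈ Ioc 0 k, f i := by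
  rw [range_eq_Ico, prod_Ico_add', Ico_add_one_add_one_eq_Ioc]

lemma prod_Ioc_zero_id_eq_factorial (k : ℕ) : ∏ i ∈ Ioc 0 k, i = k ! := by
  rw [← prod_range_add_one_eq_prod_Ioc (fun i => i), prod_range_add_one_eq_factorial]

lemma choose_sub_one_mul_factorial_eq_prod_Ioc {n : ℕ} (hn : 1 ≤ n) (k : ℕ) :
    ((n - 1).choose k : ℤ) * k ! = ∏ i ∈ Ioc 0 k, ((n : ℤ) - i) := by
  rw [← prod_range_add_one_eq_prod_Ioc, mul_comm, ← Nat.cast_mul,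
    ← descFactorial_eq_factorial_mul_choose, ← descPochhammer_eval_eq_descFactorial,
    descPochhammer_eval_eq_prod_range]
  refine prod_congr rfl fun i _ => ?_
  push_cast [hn]
  ring

lemma Ioc_filter_dvd_eq_image {p : ℕ} (hp : 0 < p) (k : ℕ) :
    {i ∈ Ioc 0 k | p ∣ i} = (Ioc 0 (k / p)).image (· * p) := by
  ext i
  simp only [mem_filter, mem_Ioc, mem_image, Nat.le_div_iff_mul_le hp]
  constructor
  · rintro ⟨⟨hi0, hik⟩, t, rfl⟩
    exact ⟨t, ⟨Nat.pos_of_mul_pos_left hi0, by rwa [mul_comm]⟩, mul_comm _ _⟩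
  · rintro ⟨t, ⟨ht0, htk⟩, rfl⟩
    exact ⟨⟨Nat.mul_pos ht0 hp, htk⟩, dvd_mul_left _ _⟩

lemma prod_Ioc_eq_prod_multiples_mul_prod_not_dvd {M : Type*} [CommMonoid M] {p : ℕ}
    (hp : 0 < p) (k : ℕ) (f : ℕ → M) :
    ∏ i ∈ Ioc 0 k, f i = (∏ t ∈ Ioc 0 (k / p), f (t * p)) * ∏ i ∈ Ioc 0 k with ¬ p ∣ i, f i := by
  rw [← prod_filter_mul_prod_filter_not _ (p ∣ ·), Ioc_filter_dvd_eq_image hp,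
    prod_image fun x _ y _ h => Nat.eq_of_mul_eq_mul_right hp h]

lemma choose_mul_sub_one_mul_prod_not_dvd {N p : ℕ} (hN : 1 ≤ N) (hp : 0 < p) (k : ℕ) :
    ((N * p - 1).choose k : ℤ) * ∏ i ∈ Ioc 0 k with ¬ p ∣ i, (i : ℤ) =
      ((N - 1).choose (k / p) : ℤ) * ∏ i ∈ Ioc 0 k with ¬ p ∣ i, ((N * p : ℤ) - i) := by
  have hfactorial : (k ! : ℤ) = p ^ (k / p) * (k / p) ! * ∏ i ∈ Ioc 0 k with ¬ p ∣ i, (i : ℤ) := by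
    rw [← prod_Ioc_zero_id_eq_factorial, Nat.cast_prod,
      prod_Ioc_eq_prod_multiples_mul_prod_not_dvd hp k, ← prod_Ioc_zero_id_eq_factorial (k / p)]
    push_cast
    rw [prod_mul_distrib, prod_const, Nat.card_Ioc, Nat.sub_zero, mul_comm ((p : ℤ) ^ _)]
  have hmultiples : ∏ t ∈ Ioc 0 (k / p), ((N : ℤ) * p - t * p) =
      p ^ (k / p) * (((N - 1).choose (k / p) : ℤ) * (k / p) !) := by
    calc ∏ t ∈ Ioc 0 (k / p), ((N : ℤ) * p - t * p)
        = ∏ t ∈ Ioc 0 (k / p), (p * ((N : ℤ) - t)) := prod_congr rfl fun _ _ => by ring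
      _ = _ := by
        rw [prod_mul_distrib, prod_const, Nat.card_Ioc, Nat.sub_zero,
          choose_sub_one_mul_factorial_eq_prod_Ioc hN]
  have hchoose := choose_sub_one_mul_factorial_eq_prod_Ioc (n := N * p) (by nlinarith) k
  rw [prod_Ioc_eq_prod_multiples_mul_prod_not_dvd hp k, hfactorial] at hchoose
  push_cast at hchoose
  rw [hmultiples] at hchoose
  refine mul_left_cancel₀ (by positivity : ((p : ℤ) ^ (k / p) * (k / p) !) ≠ 0) ?_
  linear_combination hchoose

lemma Ioc_filter_not_dvd_card_eq (p k : ℕ) : #{i ∈ Ioc 0 k | ¬ p ∣ i} = k - k / p := by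
  have h := card_filter_add_card_filter_not (s := Ioc 0 k) (p ∣ ·)
  rw [Nat.Ioc_filter_dvd_card_eq_div, Nat.card_Ioc] at h
  omega

lemma choose_mul_prime_sub_one_modEq {N p r : ℕ} (hp : p.Prime) (hN : 1 ≤ N) (hpN : p ^ r ∣ N)
    (k : ℕ) :
    ((N * p - 1).choose k : ℤ) ≡ (-1) ^ (k - k / p) * (N - 1).choose (k / p)
      [ZMOD p ^ (r + 1)] := by
  have hNp : ((N * p : ℕ) : ZMod (p ^ (r + 1))) = 0 := by
    rw [ZMod.natCast_eq_zero_iff, pow_succ]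
    exact mul_dvd_mul_right hpN p
  have hunit : IsUnit (((∏ i ∈ Ioc 0 k with ¬ p ∣ i, i : ℕ)) : ZMod (p ^ (r + 1))) := by
    rw [ZMod.isUnit_iff_coprime]
    exact Nat.Coprime.pow_right _ <| Nat.Coprime.prod_left fun i hi =>
      ((hp.coprime_iff_not_dvd).mpr (mem_filter.mp hi).2).symm
  have h := congrArg (Int.cast : ℤ → ZMod (p ^ (r + 1)))
    (choose_mul_sub_one_mul_prod_not_dvd hN hp.pos k)
  push_cast at h hNp hunit
  simp only [hNp, zero_sub, prod_neg, Ioc_filter_not_dvd_card_eq] at h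
  rw [← Nat.cast_pow, ← ZMod.intCast_eq_intCast_iff]
  push_cast
  exact hunit.mul_left_inj.mp (by linear_combination h)

lemma choose_mul_prime_sub_one_mul_add_modEq {N p r : ℕ} (hp : p.Prime) (hodd : Odd p)
    (hN : 1 ≤ N) (hpN : p ^ r ∣ N) (a : ℕ) {b : ℕ} (hb : b < p) :
    ((N * p - 1).choose (a * p + b) : ℤ) ≡ (-1) ^ b * (N - 1).choose a [ZMOD p ^ (r + 1)] := by
  have hdiv : (a * p + b) / p = a := by
    rw [add_comm, Nat.add_mul_div_right _ _ hp.pos, Nat.div_eq_of_lt hb, zero_add]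
  have hsign : (-1 : ℤ) ^ (a * p + b - a) = (-1) ^ b := by
    obtain ⟨s, rfl⟩ := hodd
    rw [show a * (2 * s + 1) + b - a = 2 * (a * s) + b by
      rw [mul_add, mul_one, mul_left_comm]; omega, pow_add, pow_mul, neg_one_sq, one_pow, one_mul]
  simpa only [hdiv, hsign] using choose_mul_prime_sub_one_modEq hp hN hpN (a * p + b)

theorem stmt13_general (p : ℕ) (hp : p.Prime) (hodd : Odd p) (m r j j' : ℕ)
    (hj : 2 * j + 1 = m * p ^ r)
    (hj' : 2 * j' + 1 = p * (2 * j + 1)) :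
    (∀ a b : ℕ, b < p →
      ((m * p ^ (r + 1) - 1).choose (a * p + b) : ℤ)
        ≡ (-1) ^ b * ((m * p ^ r - 1).choose a : ℤ) [ZMOD (p : ℤ) ^ (r + 1)]) ∧
    ((2 * j').choose j' : ℤ) ≡ (-1) ^ ((p - 1) / 2) * ((2 * j).choose j : ℤ)
      [ZMOD (p : ℤ) ^ (r + 1)] := by
  have hN : 1 ≤ m * p ^ r := by omega
  have hNp : m * p ^ (r + 1) = m * p ^ r * p := by rw [pow_succ, mul_assoc]
  have hcongr := fun a b (hb : b < p) =>
    choose_mul_prime_sub_one_mul_add_modEq hp hodd hN (dvd_mul_left (p ^ r) m) a hb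
  rw [hNp]
  refine ⟨hcongr, ?_⟩
  obtain ⟨s, hs⟩ := hodd
  have hj'_eq : j' = j * p + s := by linarith
  have h2j' : 2 * j' + 1 = m * p ^ r * p := by rw [hj', hj, mul_comm]
  rw [show 2 * j' = m * p ^ r * p - 1 by omega, show 2 * j = m * p ^ r - 1 by omega, hj'_eq,
    show (p - 1) / 2 = s by omega]
  exact hcongr j s (by omega)

/-- For an odd prime `p`, `m` positive with `p ∤ m`, `2j+1 = m p^r` and `2j'+1 = p(2j+1)`:
`C(m p^{r+1} − 1, ap + b) ≡ (−1)^b C(m p^r − 1, a) (mod p^{r+1})` for all `a ≥ 0`,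
`0 ≤ b < p`; in particular `C(2j', j') ≡ (−1)^{(p−1)/2} C(2j, j) (mod p^{r+1})`. -/
theorem stmt13 (p : ℕ) (hp : p.Prime) (hodd : Odd p) (m r j j' : ℕ)
    (hm : 1 ≤ m) (hpm : ¬ p ∣ m) (hj : 2 * j + 1 = m * p ^ r)
    (hj' : 2 * j' + 1 = p * (2 * j + 1)) :
    (∀ a b : ℕ, b < p →
      ((m * p ^ (r + 1) - 1).choose (a * p + b) : ℤ)
        ≡ (-1) ^ b * ((m * p ^ r - 1).choose a : ℤ) [ZMOD (p : ℤ) ^ (r + 1)]) ∧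
    ((2 * j').choose j' : ℤ) ≡ (-1) ^ ((p - 1) / 2) * ((2 * j).choose j : ℤ)
      [ZMOD (p : ℤ) ^ (r + 1)] :=
  stmt13_general p hp hodd m r j j' hj hj'
end

section
/- Define the sequences Z^even_s(k) and Y^even_s(n) by Z^even_0(k)=1, Z^even_s(k) = (−1)^s Σ_{k>j₁>⋯>j_s≥0} Π(j_i+1/2)^{−2}, and Y^even_s(n) = Σ_{n ≤ j₁ ≤ ⋯ ≤ j_s} Π(j_i+1/2)^{−2} (with Y^even_0(n)=1). Then for all s ≥ 1 and all k ≥ 0, Z^even_s(k) = Y^even_s(k) − Σ_{j=0}^{s−1} Y^even_{s−j}(0) Z^even_j(k). -/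
/-- `Z^even_s(k)` over `ℝ` (strictly decreasing `s`-tuples below `k` identified with
`s`-element subsets of `{0,…,k−1}`); `Z^even_0(k) = 1`. -/
noncomputable def ZevenR (s k : ℕ) : ℝ :=
  (-1) ^ s * ∑ T ∈ Finset.powersetCard s (Finset.range k),
    ∏ j ∈ T, (1 / ((j : ℝ) + 1/2) ^ 2)

/-- `Y^even_s(n) = Σ_{n ≤ j₁ ≤ ⋯ ≤ j_s} Π (j_i + 1/2)^{−2}`, the sum over weakly increasing
`s`-tuples of naturals all `≥ n`; for `s = 0` the sum is over the single empty tuple,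
so `Y^even_0(n) = 1`. -/
noncomputable def YevenR (s n : ℕ) : ℝ :=
  ∑' f : {f : Fin s → ℕ // Monotone f ∧ ∀ i, n ≤ f i},
    ∏ i, (1 / ((f.1 i : ℝ) + 1/2) ^ 2)

namespace Stmt14Aux

noncomputable def a (n : ℕ) : ℝ := 1 / ((n : ℝ) + 1/2) ^ 2

lemma a_nonneg (n : ℕ) : 0 ≤ a n := by unfold a; positivity

lemma summable_a : Summable a := by
  have h1 : Summable (fun n : ℕ => (4:ℝ) * (1 / ((n:ℝ)+1) ^ 2)) := by
    have h2 : Summable (fun n : ℕ => 1 / ((n:ℝ)+1) ^ 2) := by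
      have := (summable_nat_add_iff (f := fun n : ℕ => 1 / ((n:ℝ)) ^ 2) 1).mpr
        (Real.summable_one_div_nat_pow.mpr one_lt_two)
      exact this.congr (by intro n; push_cast; ring_nf)
    exact h2.mul_left 4
  refine h1.of_nonneg_of_le (fun n => a_nonneg n) (fun n => ?_)
  unfold a
  rw [show (4:ℝ) * (1 / ((n:ℝ)+1) ^ 2) = 4 / ((n:ℝ)+1)^2 by ring,
    div_le_div_iff₀ (by positivity) (by positivity)]
  nlinarith [sq_nonneg ((n:ℝ)), Nat.cast_nonneg (α := ℝ) n]

lemma summable_pi : ∀ s : ℕ, Summable (fun f : Fin s → ℕ => ∏ i, a (f i)) := by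
  intro s
  induction s with
  | zero =>
    have : (fun f : Fin 0 → ℕ => ∏ i, a (f i)) = fun _ => (1:ℝ) := by
      funext f; simp
    rw [this]
    haveI : Finite (Fin 0 → ℕ) := Finite.of_subsingleton
    exact Summable.of_finite
  | succ s ih =>
    have ha : (0 : ℕ → ℝ) ≤ a := fun n => a_nonneg n
    have hb : (0 : (Fin s → ℕ) → ℝ) ≤ fun f => ∏ i, a (f i) :=
      fun f => Finset.prod_nonneg fun i _ => a_nonneg _
    have h := Summable.mul_of_nonneg summable_a ih ha hb
    rw [← (Fin.consEquiv (fun _ : Fin (s+1) => ℕ)).summable_iff]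
    refine h.congr fun p => ?_
    simp [Fin.consEquiv, Fin.prod_univ_succ]

lemma summable_sub (s : ℕ) (A : Set (Fin s → ℕ)) :
    Summable (fun f : ↥A => ∏ i, a (f.1 i)) :=
  (summable_pi s).subtype A

lemma Y_eq (s n : ℕ) :
    YevenR s n = ∑' f : ↥{f : Fin s → ℕ | Monotone f ∧ ∀ i, n ≤ f i}, ∏ i, a (f.1 i) := rfl

lemma Y_zero (n : ℕ) : YevenR 0 n = 1 := by
  haveI : Unique {f : Fin 0 → ℕ // Monotone f ∧ ∀ i, n ≤ f i} :=
    ⟨⟨⟨finZeroElim, fun i _ _ => i.elim0, fun i => i.elim0⟩⟩,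
      fun f => Subtype.ext (funext fun i => i.elim0)⟩
  rw [YevenR, tsum_eq_single default (fun b hb => absurd (Subsingleton.elim b default) hb)]
  simp

lemma mono_cons {s x : ℕ} {g : Fin s → ℕ} (hg : Monotone g) (hx : ∀ i, x ≤ g i) :
    Monotone (Fin.cons x g : Fin (s+1) → ℕ) := by
  intro i j hij
  rcases Fin.eq_zero_or_eq_succ i with rfl | ⟨i', rfl⟩
  · rcases Fin.eq_zero_or_eq_succ j with rfl | ⟨j', rfl⟩
    · exact le_rfl
    · simpa using hx j'
  · rcases Fin.eq_zero_or_eq_succ j with rfl | ⟨j', rfl⟩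
    · exact absurd hij (not_le.mpr (Fin.succ_pos i'))
    · simp only [Fin.cons_succ]
      exact hg (by exact_mod_cast Fin.succ_le_succ_iff.mp hij)

def eA (s n : ℕ) : {f : Fin s → ℕ // Monotone f ∧ ∀ i, n ≤ f i} ≃
    ↥{f : Fin (s+1) → ℕ | (Monotone f ∧ ∀ i, n ≤ f i) ∧ f 0 = n} where
  toFun g := ⟨Fin.cons n g.1,
    ⟨⟨mono_cons g.2.1 g.2.2, fun i => Fin.cases le_rfl (fun i' => by simpa using g.2.2 i') i⟩,
      by simp⟩⟩
  invFun f := ⟨Fin.tail f.1,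
    ⟨fun i j hij => f.2.1.1 (Fin.succ_le_succ_iff.mpr hij),
      fun i => f.2.1.2 i.succ⟩⟩
  left_inv g := Subtype.ext (by simp)
  right_inv f := Subtype.ext (by
    have h0 : f.1 0 = n := f.2.2
    conv_rhs => rw [← Fin.cons_self_tail f.1]
    rw [h0])

lemma Y_rec (s n : ℕ) : YevenR (s+1) n = a n * YevenR s n + YevenR (s+1) (n+1) := by
  classical
  have hdisj : Disjoint {f : Fin (s+1) → ℕ | (Monotone f ∧ ∀ i, n ≤ f i) ∧ f 0 = n}
      {f : Fin (s+1) → ℕ | Monotone f ∧ ∀ i, n+1 ≤ f i} := by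
    rw [Set.disjoint_left]
    intro f h1 h2
    have h3 := h2.2 0
    have h4 := h1.2
    omega
  have hun : {f : Fin (s+1) → ℕ | Monotone f ∧ ∀ i, n ≤ f i}
      = {f : Fin (s+1) → ℕ | (Monotone f ∧ ∀ i, n ≤ f i) ∧ f 0 = n}
        ∪ {f : Fin (s+1) → ℕ | Monotone f ∧ ∀ i, n+1 ≤ f i} := by
    ext f
    constructor
    · rintro ⟨hm, hb⟩
      by_cases h0 : f 0 = n
      · exact Or.inl ⟨⟨hm, hb⟩, h0⟩
      · refine Or.inr ⟨hm, fun i => ?_⟩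
        have h1 := hm (Fin.zero_le i)
        have h2 := hb 0
        omega
    · rintro (⟨⟨hm, hb⟩, _⟩ | ⟨hm, hb⟩)
      · exact ⟨hm, hb⟩
      · exact ⟨hm, fun i => le_trans (Nat.le_succ n) (hb i)⟩
  rw [Y_eq (s+1) n, hun]
  rw [Summable.tsum_union_disjoint (f := fun g : Fin (s+1) → ℕ => ∏ i, a (g i)) hdisj
    (summable_sub _ _) (summable_sub _ _)]
  congr 1
  rw [← (eA s n).tsum_eq, Y_eq s n, ← tsum_mul_left]
  refine tsum_congr fun g => ?_
  show (∏ i, a ((Fin.cons n g.1 : Fin (s+1) → ℕ) i)) = a n * ∏ i, a (g.1 i)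
  simp [Fin.prod_univ_succ]

lemma Z_zero (k : ℕ) : ZevenR 0 k = 1 := by
  simp [ZevenR]

lemma Z_at_zero (j : ℕ) : ZevenR (j+1) 0 = 0 := by
  unfold ZevenR
  rw [Finset.range_zero, Finset.powersetCard_eq_empty.mpr (by simp)]
  simp

lemma Z_rec (j k : ℕ) : ZevenR (j+1) (k+1) = ZevenR (j+1) k - a k * ZevenR j k := by
  classical
  have hk : k ∉ Finset.range k := by simp
  have hdisj : Disjoint (Finset.powersetCard (j+1) (Finset.range k))
      ((Finset.powersetCard j (Finset.range k)).image (insert k)) := by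
    rw [Finset.disjoint_left]
    intro T hT hT'
    rw [Finset.mem_powersetCard] at hT
    obtain ⟨T', hT', rfl⟩ := Finset.mem_image.mp hT'
    exact hk (hT.1 (Finset.mem_insert_self k T'))
  have hinj : ∀ x ∈ Finset.powersetCard j (Finset.range k),
      ∀ y ∈ Finset.powersetCard j (Finset.range k), insert k x = insert k y → x = y := by
    intro x hx y hy h
    rw [Finset.mem_powersetCard] at hx hy
    have hxk : k ∉ x := fun hxx => hk (hx.1 hxx)
    have hyk : k ∉ y := fun hyy => hk (hy.1 hyy)
    rw [← Finset.erase_insert hxk, ← Finset.erase_insert hyk, h]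
  rw [ZevenR, ZevenR, ZevenR, Finset.range_add_one, Finset.powersetCard_succ_insert hk,
    Finset.sum_union hdisj, Finset.sum_image hinj]
  have h1 : ∀ T ∈ Finset.powersetCard j (Finset.range k),
      (∏ i ∈ insert k T, (1 / ((i : ℝ) + 1/2) ^ 2))
        = a k * ∏ i ∈ T, (1 / ((i : ℝ) + 1/2) ^ 2) := by
    intro T hT
    rw [Finset.mem_powersetCard] at hT
    have hkT : k ∉ T := fun hkk => hk (hT.1 hkk)
    rw [Finset.prod_insert hkT]
    rfl
  rw [Finset.sum_congr rfl h1, ← Finset.mul_sum, pow_succ]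
  ring

lemma key (k : ℕ) : ∀ s : ℕ,
    ∑ j ∈ Finset.range (s+1), YevenR (s-j) 0 * ZevenR j k = YevenR s k := by
  induction k with
  | zero =>
    intro s
    rw [Finset.sum_range_succ']
    simp [Z_at_zero, Z_zero]
  | succ k ih =>
    intro s
    cases s with
    | zero => simp [Y_zero, Z_zero]
    | succ s =>
      rw [Finset.sum_range_succ']
      have h1 : ∀ j ∈ Finset.range (s+1),
          YevenR (s+1-(j+1)) 0 * ZevenR (j+1) (k+1)
            = YevenR (s-j) 0 * ZevenR (j+1) k - a k * (YevenR (s-j) 0 * ZevenR j k) := by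
        intro j hj
        rw [Z_rec, Nat.succ_sub_succ]
        ring
      rw [Finset.sum_congr rfl h1, Finset.sum_sub_distrib, ← Finset.mul_sum, ih s]
      have h2 : (∑ j ∈ Finset.range (s+1), YevenR (s-j) 0 * ZevenR (j+1) k)
          + YevenR (s+1) 0 = YevenR (s+1) k := by
        have h2 := ih (s+1)
        rw [Finset.sum_range_succ'] at h2
        simp only [Nat.succ_sub_succ, Nat.sub_zero, Z_zero, mul_one] at h2
        exact h2
      have h4 := Y_rec s k
      simp only [Nat.sub_zero, Z_zero, mul_one]
      linarith

end Stmt14Aux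

/-- For all `s ≥ 1` and `k ≥ 0`:
`Z^even_s(k) = Y^even_s(k) − Σ_{j=0}^{s−1} Y^even_{s−j}(0) Z^even_j(k)`. -/
theorem stmt14 (s : ℕ) (hs : 1 ≤ s) (k : ℕ) :
    ZevenR s k = YevenR s k - ∑ j ∈ Finset.range s, YevenR (s - j) 0 * ZevenR j k := by
  have h := Stmt14Aux.key k s
  rw [Finset.sum_range_succ, Nat.sub_self, Stmt14Aux.Y_zero, one_mul] at h
  linarith
end

section
/- Let F be holomorphic on the upper half-plane and γ ∈ SL₂(ℝ) with j(γ,τ) = cτ + d. Then for every nonnegative integer m, (d/dτ)^{m+1}[ j(γ,τ)^m F(γτ) ] = j(γ,τ)^{−m−2} F^{(m+1)}(γτ) (Bol's formula). -/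
open Finset

/-- Bol coefficients: `A m k r = C(k,r) * (m-r)(m-r-1)⋯(m-k+1)` (falling factorial). -/
noncomputable def bolA (m k r : ℕ) : ℂ :=
  (k.choose r : ℂ) * ∏ i ∈ Finset.range (k - r), ((m : ℂ) - r - i)

lemma bolA_zero (m k : ℕ) :
    bolA m (k + 1) 0 = bolA m k 0 * ((m : ℂ) - k) := by
  simp only [bolA, Nat.choose_zero_right, Nat.cast_one, one_mul, Nat.sub_zero,
    Finset.prod_range_succ, Nat.cast_zero]
  ring

lemma bolA_succ (m k r : ℕ) :
    bolA m (k + 1) (r + 1) = bolA m k (r + 1) * ((m : ℂ) - k - (r + 1)) + bolA m k r := by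
  rcases lt_or_ge r k with hrk | hkr
  · -- r < k
    obtain ⟨t, ht⟩ : ∃ t, k = r + 1 + t := ⟨k - (r + 1), by omega⟩
    subst ht
    have h1 : (r + 1 + t + 1) - (r + 1) = t + 1 := by omega
    have h2 : (r + 1 + t) - (r + 1) = t := by omega
    have h3 : (r + 1 + t) - r = t + 1 := by omega
    rw [bolA, bolA, bolA, h1, h2, h3]
    have hP1 : ∏ i ∈ Finset.range (t + 1), ((m : ℂ) - ((r:ℂ)+1) - i)
        = (∏ i ∈ Finset.range t, ((m : ℂ) - ((r:ℂ)+1) - i)) * ((m : ℂ) - ((r:ℂ)+1) - t) :=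
      Finset.prod_range_succ _ _
    have hP2 : ∏ i ∈ Finset.range (t + 1), ((m : ℂ) - r - i)
        = (∏ i ∈ Finset.range t, ((m : ℂ) - ((r:ℂ)+1) - i)) * ((m : ℂ) - r) := by
      rw [Finset.prod_range_succ' (fun i => (m : ℂ) - r - i) t]
      congr 1
      · exact Finset.prod_congr rfl fun i _ => by push_cast; ring
      · push_cast; ring
    have hC : ((r + 1 + t).choose (r+1) : ℂ) * ((r:ℂ)+1)
        = ((r + 1 + t).choose r : ℂ) * ((t:ℂ) + 1) := by
      have h5 := Nat.choose_succ_right_eq (r + 1 + t) r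
      have h4 : r + 1 + t - r = t + 1 := by omega
      rw [h4] at h5
      have := congrArg (Nat.cast : ℕ → ℂ) h5
      push_cast at this
      linear_combination this
    have hPa : ((r + 1 + t + 1).choose (r+1) : ℂ)
        = ((r + 1 + t).choose (r+1) : ℂ) + ((r + 1 + t).choose r : ℂ) := by
      rw [Nat.choose_succ_succ (r + 1 + t) r]
      push_cast; ring
    push_cast
    rw [hP1, hP2, hPa]
    linear_combination (∏ i ∈ Finset.range t, ((m : ℂ) - ((r:ℂ)+1) - i)) * hC
  · -- r ≥ k
    rcases eq_or_lt_of_le hkr with rfl | hlt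
    · simp [bolA, Nat.choose_succ_self, Nat.sub_self]
    · have h1 : (k + 1).choose (r + 1) = 0 := Nat.choose_eq_zero_of_lt (by omega)
      have h2 : k.choose (r + 1) = 0 := Nat.choose_eq_zero_of_lt (by omega)
      have h3 : k.choose r = 0 := Nat.choose_eq_zero_of_lt hlt
      simp [bolA, h1, h2, h3]

lemma bolA_eq_zero (m r : ℕ) (hr : r ≤ m) : bolA m (m + 1) r = 0 := by
  rw [bolA]
  have : ∏ i ∈ Finset.range (m + 1 - r), ((m : ℂ) - r - i) = 0 := by
    apply Finset.prod_eq_zero (i := m - r) (Finset.mem_range.2 (by omega))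
    have : ((m - r : ℕ) : ℂ) = (m : ℂ) - r := by
      push_cast [Nat.cast_sub hr]; ring
    rw [this]; ring
  rw [this, mul_zero]

lemma bolA_diag (m k : ℕ) : bolA m k k = 1 := by
  simp [bolA, Nat.sub_self]

section analysis

variable {a b c d : ℝ} (hdet : a * d - b * c = 1)

lemma j_ne_zero (hdet : a * d - b * c = 1) {τ : ℂ} (hτ : 0 < τ.im) :
    (c : ℂ) * τ + d ≠ 0 := by
  intro h
  have him : c * τ.im = 0 := by
    have := congrArg Complex.im h
    simpa [Complex.add_im, Complex.mul_im] using this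
  have hc : c = 0 := by
    rcases mul_eq_zero.1 him with h' | h'
    · exact h'
    · exact absurd h' (ne_of_gt hτ)
  have hre : c * τ.re + d = 0 := by
    have := congrArg Complex.re h
    simpa [Complex.add_re, Complex.mul_re] using this
  have hd : d = 0 := by rw [hc] at hre; linarith
  rw [hc, hd] at hdet; linarith

lemma smul_mem (hdet : a * d - b * c = 1) {τ : ℂ} (hτ : 0 < τ.im) :
    0 < (((a : ℂ) * τ + b) / ((c : ℂ) * τ + d)).im := by
  have hj := j_ne_zero hdet hτ
  have hns : 0 < Complex.normSq ((c : ℂ) * τ + d) := Complex.normSq_pos.2 hj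
  rw [Complex.div_im]
  have h1 : ((a : ℂ) * τ + b).im = a * τ.im := by simp [Complex.add_im, Complex.mul_im]
  have h2 : ((a : ℂ) * τ + b).re = a * τ.re + b := by simp [Complex.add_re, Complex.mul_re]
  have h3 : ((c : ℂ) * τ + d).im = c * τ.im := by simp [Complex.add_im, Complex.mul_im]
  have h4 : ((c : ℂ) * τ + d).re = c * τ.re + d := by simp [Complex.add_re, Complex.mul_re]
  rw [h1, h2, h3, h4]
  have : a * τ.im * (c * τ.re + d) / Complex.normSq ((c:ℂ)*τ+d)
      - (a * τ.re + b) * (c * τ.im) / Complex.normSq ((c:ℂ)*τ+d)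
      = τ.im * (a * d - b * c) / Complex.normSq ((c:ℂ)*τ+d) := by ring
  rw [this, hdet, mul_one]
  positivity

lemma hasDerivAt_smul_map (hdet : a * d - b * c = 1) {τ : ℂ} (hτ : 0 < τ.im) :
    HasDerivAt (fun z : ℂ => ((a : ℂ) * z + b) / ((c : ℂ) * z + d))
      (((c : ℂ) * τ + d) ^ (-2 : ℤ)) τ := by
  have hj := j_ne_zero hdet hτ
  have hnum : HasDerivAt (fun z : ℂ => (a : ℂ) * z + b) a τ := by
    simpa using ((hasDerivAt_id τ).const_mul (a : ℂ)).add_const (b : ℂ)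
  have hden : HasDerivAt (fun z : ℂ => (c : ℂ) * z + d) c τ := by
    simpa using ((hasDerivAt_id τ).const_mul (c : ℂ)).add_const (d : ℂ)
  have := hnum.div hden hj
  have hdc : ((a:ℂ) * d - (b:ℂ) * c) = 1 := by exact_mod_cast congrArg (fun x : ℝ => (x:ℂ)) hdet
  have h2 : ((a:ℂ) * ((c:ℂ) * τ + d) - ((a:ℂ) * τ + b) * c) = 1 := by linear_combination hdc
  rw [h2] at this
  have h3 : ((c : ℂ) * τ + d) ^ (-2 : ℤ) = 1 / ((c:ℂ) * τ + d) ^ 2 := by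
    rw [zpow_neg, one_div, zpow_two, sq]
  rw [h3]
  exact this

end analysis

lemma bolA_gt (m k r : ℕ) (h : k < r) : bolA m k r = 0 := by
  simp [bolA, Nat.choose_eq_zero_of_lt h]

/-- The combinatorial heart of Bol's formula: one differentiation step on the sum. -/
lemma bol_sum_step (m k : ℕ) (C : ℂ) (J : ℤ → ℂ) (G : ℕ → ℂ) :
    ∑ r ∈ Finset.range (k+1),
      (bolA m k r * ((m:ℂ)-(k:ℂ)-(r:ℂ)) * C^(k+1-r) * J ((m:ℤ)-((k:ℤ)+1)-(r:ℤ)) * G r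
       + bolA m k r * C^(k-r) * J ((m:ℤ)-((k:ℤ)+1)-((r:ℤ)+1)) * G (r+1))
    = ∑ r ∈ Finset.range (k+2),
        bolA m (k+1) r * C^(k+1-r) * J ((m:ℤ)-((k:ℤ)+1)-(r:ℤ)) * G r := by
  rw [Finset.sum_add_distrib]
  rw [Finset.sum_range_succ'
    (fun r => bolA m (k+1) r * C^(k+1-r) * J ((m:ℤ)-((k:ℤ)+1)-(r:ℤ)) * G r) (k+1)]
  rw [Finset.sum_range_succ'
    (fun r => bolA m k r * ((m:ℂ)-(k:ℂ)-(r:ℂ)) * C^(k+1-r) * J ((m:ℤ)-((k:ℤ)+1)-(r:ℤ)) * G r) k]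
  have hT0 : bolA m (k+1) 0 * C^(k+1-0) * J ((m:ℤ)-((k:ℤ)+1)-((0:ℕ):ℤ)) * G 0
      = bolA m k 0 * ((m:ℂ)-(k:ℂ)-((0:ℕ):ℂ)) * C^(k+1-0) * J ((m:ℤ)-((k:ℤ)+1)-((0:ℕ):ℤ)) * G 0 := by
    rw [bolA_zero]; push_cast; ring
  have hmain : ∀ r ∈ Finset.range (k+1),
      bolA m (k+1) (r+1) * C^(k+1-(r+1)) * J ((m:ℤ)-((k:ℤ)+1)-((r+1:ℕ):ℤ)) * G (r+1)
      = bolA m k (r+1) * ((m:ℂ)-(k:ℂ)-((r+1:ℕ):ℂ)) * C^(k+1-(r+1))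
          * J ((m:ℤ)-((k:ℤ)+1)-((r+1:ℕ):ℤ)) * G (r+1)
        + bolA m k r * C^(k-r) * J ((m:ℤ)-((k:ℤ)+1)-((r:ℤ)+1)) * G (r+1) := by
    intro r hr
    rw [bolA_succ]
    have h1 : k + 1 - (r + 1) = k - r := by omega
    rw [h1]
    have h2 : ((m:ℤ)-((k:ℤ)+1)-((r+1:ℕ):ℤ)) = ((m:ℤ)-((k:ℤ)+1)-((r:ℤ)+1)) := by push_cast; ring
    rw [h2]
    push_cast
    ring
  rw [Finset.sum_congr rfl hmain, Finset.sum_add_distrib]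
  rw [Finset.sum_range_succ
    (fun r => bolA m k (r+1) * ((m:ℂ)-(k:ℂ)-((r+1:ℕ):ℂ)) * C^(k+1-(r+1))
      * J ((m:ℤ)-((k:ℤ)+1)-((r+1:ℕ):ℤ)) * G (r+1)) k]
  rw [bolA_gt m k (k+1) (by omega)]
  rw [hT0]
  ring

lemma isOpen_H : IsOpen {z : ℂ | 0 < z.im} :=
  isOpen_lt continuous_const Complex.continuous_im

lemma iterDeriv_diffOn (F : ℂ → ℂ) (hF : DifferentiableOn ℂ F {z : ℂ | 0 < z.im}) (r : ℕ) :
    DifferentiableOn ℂ (iteratedDeriv r F) {z : ℂ | 0 < z.im} := by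
  induction r with
  | zero => simpa using hF
  | succ n ih =>
    have han : AnalyticOnNhd ℂ (iteratedDeriv n F) {z : ℂ | 0 < z.im} :=
      ih.analyticOnNhd isOpen_H
    rw [iteratedDeriv_succ]
    exact han.deriv.differentiableOn

lemma iterDerivWithin_eq (f : ℂ → ℂ) (n : ℕ) {x : ℂ} (hx : x ∈ {z : ℂ | 0 < z.im}) :
    iteratedDerivWithin n f {z : ℂ | 0 < z.im} x = iteratedDeriv n f x := by
  rw [iteratedDerivWithin_eq_iteratedFDerivWithin, iteratedDeriv,
    iteratedFDerivWithin_of_isOpen n isOpen_H hx]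

theorem bol_key (F : ℂ → ℂ) (hF : DifferentiableOn ℂ F {z : ℂ | 0 < z.im})
    (a b c d : ℝ) (hdet : a * d - b * c = 1) (m : ℕ) (k : ℕ) :
    ∀ τ : ℂ, 0 < τ.im →
      iteratedDeriv k
        (fun z : ℂ => ((c : ℂ) * z + (d : ℂ)) ^ m *
          F (((a : ℂ) * z + (b : ℂ)) / ((c : ℂ) * z + (d : ℂ)))) τ
      = ∑ r ∈ Finset.range (k + 1),
          bolA m k r * (c : ℂ) ^ (k - r) *
            ((c : ℂ) * τ + (d : ℂ)) ^ ((m : ℤ) - (k : ℤ) - (r : ℤ)) *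
            iteratedDeriv r F (((a : ℂ) * τ + (b : ℂ)) / ((c : ℂ) * τ + (d : ℂ))) := by
  induction k with
  | zero =>
    intro τ hτ
    rw [iteratedDeriv_zero, Finset.sum_range_one, bolA_diag]
    simp only [Nat.sub_self, pow_zero, iteratedDeriv_zero, Nat.cast_zero]
    rw [show (m : ℤ) - 0 - 0 = (m : ℤ) by ring, zpow_natCast]
    ring
  | succ k ih =>
    intro τ hτ
    have hj : (c : ℂ) * τ + (d : ℂ) ≠ 0 := j_ne_zero hdet hτ
    have hγ : 0 < (((a : ℂ) * τ + (b : ℂ)) / ((c : ℂ) * τ + (d : ℂ))).im := smul_mem hdet hτ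
    rw [iteratedDeriv_succ]
    have hEq : iteratedDeriv k
        (fun z : ℂ => ((c : ℂ) * z + (d : ℂ)) ^ m *
          F (((a : ℂ) * z + (b : ℂ)) / ((c : ℂ) * z + (d : ℂ))))
        =ᶠ[nhds τ] (fun σ : ℂ => ∑ r ∈ Finset.range (k + 1),
          bolA m k r * (c : ℂ) ^ (k - r) *
            ((c : ℂ) * σ + (d : ℂ)) ^ ((m : ℤ) - (k : ℤ) - (r : ℤ)) *
            iteratedDeriv r F (((a : ℂ) * σ + (b : ℂ)) / ((c : ℂ) * σ + (d : ℂ)))) :=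
      Filter.eventuallyEq_of_mem (isOpen_H.mem_nhds hτ) (fun σ hσ => ih σ hσ)
    rw [hEq.deriv_eq]
    have hterm : ∀ r ∈ Finset.range (k + 1),
        HasDerivAt (fun σ : ℂ =>
          bolA m k r * (c : ℂ) ^ (k - r) *
            ((c : ℂ) * σ + (d : ℂ)) ^ ((m : ℤ) - (k : ℤ) - (r : ℤ)) *
            iteratedDeriv r F (((a : ℂ) * σ + (b : ℂ)) / ((c : ℂ) * σ + (d : ℂ))))
          (bolA m k r * ((m : ℂ) - (k : ℂ) - (r : ℂ)) * (c : ℂ) ^ (k + 1 - r) *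
              ((c : ℂ) * τ + (d : ℂ)) ^ ((m : ℤ) - ((k : ℤ) + 1) - (r : ℤ)) *
              iteratedDeriv r F (((a : ℂ) * τ + (b : ℂ)) / ((c : ℂ) * τ + (d : ℂ)))
            + bolA m k r * (c : ℂ) ^ (k - r) *
              ((c : ℂ) * τ + (d : ℂ)) ^ ((m : ℤ) - ((k : ℤ) + 1) - ((r : ℤ) + 1)) *
              iteratedDeriv (r + 1) F (((a : ℂ) * τ + (b : ℂ)) / ((c : ℂ) * τ + (d : ℂ)))) τ := by
      intro r hr
      have hrk : r ≤ k := Nat.lt_succ_iff.mp (Finset.mem_range.mp hr)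
      have hlin : HasDerivAt (fun z : ℂ => (c : ℂ) * z + (d : ℂ)) (c : ℂ) τ := by
        simpa using ((hasDerivAt_id τ).const_mul (c : ℂ)).add_const (d : ℂ)
      have hzp : HasDerivAt (fun z : ℂ => ((c : ℂ) * z + (d : ℂ)) ^ ((m : ℤ) - (k : ℤ) - (r : ℤ)))
          ((((m : ℤ) - (k : ℤ) - (r : ℤ) : ℤ) : ℂ) *
            ((c : ℂ) * τ + (d : ℂ)) ^ ((m : ℤ) - (k : ℤ) - (r : ℤ) - 1) * (c : ℂ)) τ := by
        have h := (hasDerivAt_zpow ((m : ℤ) - (k : ℤ) - (r : ℤ)) ((c : ℂ) * τ + (d : ℂ))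
          (Or.inl hj)).comp τ hlin
        simpa [Function.comp_def, mul_assoc] using h
      have hdF : DifferentiableAt ℂ (iteratedDeriv r F)
          (((a : ℂ) * τ + (b : ℂ)) / ((c : ℂ) * τ + (d : ℂ))) :=
        (iterDeriv_diffOn F hF r).differentiableAt (isOpen_H.mem_nhds hγ)
      have hF' : HasDerivAt (iteratedDeriv r F)
          (iteratedDeriv (r + 1) F (((a : ℂ) * τ + (b : ℂ)) / ((c : ℂ) * τ + (d : ℂ))))
          (((a : ℂ) * τ + (b : ℂ)) / ((c : ℂ) * τ + (d : ℂ))) := by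
        rw [iteratedDeriv_succ]
        exact hdF.hasDerivAt
      have hcomp : HasDerivAt (fun σ : ℂ =>
          iteratedDeriv r F (((a : ℂ) * σ + (b : ℂ)) / ((c : ℂ) * σ + (d : ℂ))))
          (iteratedDeriv (r + 1) F (((a : ℂ) * τ + (b : ℂ)) / ((c : ℂ) * τ + (d : ℂ))) *
            ((c : ℂ) * τ + (d : ℂ)) ^ (-2 : ℤ)) τ := by
        have h := hF'.comp τ (hasDerivAt_smul_map hdet hτ)
        simpa [Function.comp_def] using h
      have hmul := (hzp.fun_mul hcomp).const_mul (bolA m k r * (c : ℂ) ^ (k - r))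
      have hfun : (fun σ : ℂ => bolA m k r * (c : ℂ) ^ (k - r) *
            (((c : ℂ) * σ + (d : ℂ)) ^ ((m : ℤ) - (k : ℤ) - (r : ℤ)) *
              iteratedDeriv r F (((a : ℂ) * σ + (b : ℂ)) / ((c : ℂ) * σ + (d : ℂ)))))
          = (fun σ : ℂ => bolA m k r * (c : ℂ) ^ (k - r) *
            ((c : ℂ) * σ + (d : ℂ)) ^ ((m : ℤ) - (k : ℤ) - (r : ℤ)) *
            iteratedDeriv r F (((a : ℂ) * σ + (b : ℂ)) / ((c : ℂ) * σ + (d : ℂ)))) := by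
        funext σ; ring
      rw [hfun] at hmul
      refine hmul.congr_deriv ?_
      have h1 : (m : ℤ) - ((k : ℤ) + 1) - (r : ℤ) = (m : ℤ) - (k : ℤ) - (r : ℤ) - 1 := by ring
      have h2 : (m : ℤ) - ((k : ℤ) + 1) - ((r : ℤ) + 1)
          = ((m : ℤ) - (k : ℤ) - (r : ℤ)) + (-2) := by ring
      have hc2 : (c : ℂ) ^ (k + 1 - r) = (c : ℂ) ^ (k - r) * (c : ℂ) := by
        rw [← pow_succ]; congr 1; omega
      have hcast : ((((m : ℤ) - (k : ℤ) - (r : ℤ) : ℤ)) : ℂ)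
          = (m : ℂ) - (k : ℂ) - (r : ℂ) := by push_cast; ring
      rw [h1, h2, zpow_add₀ hj, hc2, hcast]
      ring
    have hsum := (HasDerivAt.fun_sum hterm).deriv
    rw [hsum]
    have hstep := bol_sum_step m k (c : ℂ)
      (fun e : ℤ => ((c : ℂ) * τ + (d : ℂ)) ^ e)
      (fun r : ℕ => iteratedDeriv r F (((a : ℂ) * τ + (b : ℂ)) / ((c : ℂ) * τ + (d : ℂ))))
    push_cast
    push_cast at hstep
    convert hstep using 2

/-- Bol's formula: for `F` holomorphic on the upper half-plane `H` and
`γ = [[a,b],[c,d]] ∈ SL₂(ℝ)`, with `j(γ,τ) = cτ + d`, one has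
`(d/dτ)^{m+1}[j(γ,τ)^m F(γτ)] = j(γ,τ)^{−m−2} F^{(m+1)}(γτ)` on `H`. -/
theorem stmt16 (F : ℂ → ℂ) (hF : DifferentiableOn ℂ F {z : ℂ | 0 < z.im})
    (a b c d : ℝ) (hdet : a * d - b * c = 1) (m : ℕ) (τ : ℂ) (hτ : 0 < τ.im) :
    iteratedDerivWithin (m + 1)
        (fun z : ℂ => ((c : ℂ) * z + (d : ℂ)) ^ m *
          F (((a : ℂ) * z + (b : ℂ)) / ((c : ℂ) * z + (d : ℂ)))) {z : ℂ | 0 < z.im} τ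
      = ((c : ℂ) * τ + (d : ℂ)) ^ (-(m : ℤ) - 2) *
        iteratedDerivWithin (m + 1) F {z : ℂ | 0 < z.im}
          (((a : ℂ) * τ + (b : ℂ)) / ((c : ℂ) * τ + (d : ℂ))) := by
  have hγ : (((a : ℂ) * τ + (b : ℂ)) / ((c : ℂ) * τ + (d : ℂ))) ∈ {z : ℂ | 0 < z.im} :=
    smul_mem hdet hτ
  have hτ' : τ ∈ {z : ℂ | 0 < z.im} := hτ
  rw [iterDerivWithin_eq _ _ hτ', iterDerivWithin_eq F _ hγ]
  rw [bol_key F hF a b c d hdet m (m + 1) τ hτ]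
  rw [Finset.sum_range_succ]
  have hzero : ∑ r ∈ Finset.range (m + 1),
      bolA m (m + 1) r * (c : ℂ) ^ (m + 1 - r) *
        ((c : ℂ) * τ + (d : ℂ)) ^ ((m : ℤ) - ((m + 1 : ℕ) : ℤ) - (r : ℤ)) *
        iteratedDeriv r F (((a : ℂ) * τ + (b : ℂ)) / ((c : ℂ) * τ + (d : ℂ))) = 0 := by
    apply Finset.sum_eq_zero
    intro r hr
    rw [bolA_eq_zero m r (Nat.lt_succ_iff.mp (Finset.mem_range.mp hr))]
    ring
  rw [hzero, zero_add, bolA_diag, Nat.sub_self, pow_zero]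
  rw [show (m : ℤ) - ((m + 1 : ℕ) : ℤ) - ((m + 1 : ℕ) : ℤ) = -(m : ℤ) - 2 by push_cast; ring]
  ring
end

section
/- Let τ be in the upper half-plane and (a,b) ∈ ℝ² − {(0,0)}, with arg taking values in [−π, π). Then arg(−1/τ) + arg(aτ + b) ≥ π if and only if a > 0 and b ≤ 0. -/
/-- The argument function with values in `[−π, π)`: obtained from the principal argument
(valued in `(−π, π]`) by sending `π` to `−π`. -/
noncomputable def argNeg (z : ℂ) : ℝ :=
  if Complex.arg z = Real.pi then -Real.pi else Complex.arg z

lemma argNeg_of_ne (z : ℂ) (h : Complex.arg z ≠ Real.pi) : argNeg z = Complex.arg z :=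
  if_neg h

lemma key_lemma (τ : ℂ) (hτ : 0 < τ.im) (a b : ℝ) (ha : 0 < a) :
    Complex.arg τ ≤ Complex.arg ((a : ℂ) * τ + (b : ℂ)) ↔ b ≤ 0 := by
  set w : ℂ := (a : ℂ) * τ + (b : ℂ) with hw
  have hwim : w.im = a * τ.im := by simp [hw]
  have hwim0 : 0 < w.im := by rw [hwim]; positivity
  have hτ0 : τ ≠ 0 := fun h => by simp [h] at hτ
  have hw0 : w ≠ 0 := fun h => by rw [h] at hwim0; simp at hwim0
  have habsw : 0 < ‖w‖ := norm_pos_iff.mpr hw0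
  have habsτ : 0 < ‖τ‖ := norm_pos_iff.mpr hτ0
  have hwre : w.re = a * τ.re + b := by simp [hw]
  have hargτpos : 0 < Complex.arg τ := by
    rcases (Complex.arg_nonneg_iff.mpr hτ.le).lt_or_eq with h | h
    · exact h
    · exact absurd (Complex.arg_eq_zero_iff.mp h.symm).2 hτ.ne'
  have hargwpos : 0 < Complex.arg w := by
    rcases (Complex.arg_nonneg_iff.mpr hwim0.le).lt_or_eq with h | h
    · exact h
    · exact absurd (Complex.arg_eq_zero_iff.mp h.symm).2 hwim0.ne'
  have hsin : Real.sin (Complex.arg w - Complex.arg τ)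
      = -b * τ.im / (‖w‖ * ‖τ‖) := by
    rw [Real.sin_sub, Complex.sin_arg, Complex.sin_arg, Complex.cos_arg hw0,
      Complex.cos_arg hτ0, hwim, hwre]
    field_simp
    ring
  constructor
  · intro h
    have h1 : 0 ≤ Real.sin (Complex.arg w - Complex.arg τ) := by
      apply Real.sin_nonneg_of_nonneg_of_le_pi (by linarith)
      have := Complex.arg_le_pi w
      linarith
    rw [hsin] at h1
    have h2 : 0 ≤ -b * τ.im := by
      by_contra hc
      push_neg at hc
      have : -b * τ.im / (‖w‖ * ‖τ‖) < 0 :=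
        div_neg_of_neg_of_pos hc (by positivity)
      linarith
    nlinarith
  · intro hb
    by_contra hc
    push_neg at hc
    have h1 : Real.sin (Complex.arg w - Complex.arg τ) < 0 := by
      apply Real.sin_neg_of_neg_of_neg_pi_lt (by linarith)
      have := Complex.arg_le_pi τ
      linarith
    rw [hsin] at h1
    have h2 : 0 ≤ -b * τ.im / (‖w‖ * ‖τ‖) := by
      apply div_nonneg _ (by positivity)
      nlinarith
    linarith

/-- For `τ` in the upper half-plane and `(a,b) ∈ ℝ² ∖ {(0,0)}`, with arguments taken in
`[−π, π)`: `arg(−1/τ) + arg(aτ + b) ≥ π ↔ a > 0 ∧ b ≤ 0`. -/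
theorem stmt17 (τ : ℂ) (hτ : 0 < τ.im) (a b : ℝ) (hab : (a, b) ≠ (0, 0)) :
    Real.pi ≤ argNeg (-1 / τ) + argNeg ((a : ℂ) * τ + (b : ℂ)) ↔ 0 < a ∧ b ≤ 0 := by
  have hτ0 : τ ≠ 0 := fun h => by simp [h] at hτ
  have hargτpos : 0 < Complex.arg τ := by
    rcases (Complex.arg_nonneg_iff.mpr hτ.le).lt_or_eq with h | h
    · exact h
    · exact absurd (Complex.arg_eq_zero_iff.mp h.symm).2 hτ.ne'
  have hargτlt : Complex.arg τ < Real.pi :=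
    lt_of_le_of_ne (Complex.arg_le_pi τ) (fun h => by
      have := (Complex.arg_eq_pi_iff.mp h).2
      exact hτ.ne' this)
  -- arg(-1/τ) = π - arg τ
  have harg1 : Complex.arg (-1 / τ) = Real.pi - Complex.arg τ := by
    have h1 : -1 / τ = -(τ⁻¹) := by ring
    have hinv : Complex.arg τ⁻¹ = -Complex.arg τ := by
      rw [Complex.arg_inv]
      exact if_neg (by intro h; linarith)
    have hinvneg : (τ⁻¹).im < 0 := by
      rw [Complex.inv_im]
      apply div_neg_of_neg_of_pos (by linarith) (Complex.normSq_pos.mpr hτ0)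
    rw [h1, Complex.arg_neg_eq_arg_add_pi_of_im_neg hinvneg, hinv]
    ring
  have hargNeg1 : argNeg (-1 / τ) = Real.pi - Complex.arg τ := by
    rw [argNeg_of_ne _ (by rw [harg1]; intro h; exact hargτpos.ne' (by linarith)), harg1]
  rw [hargNeg1]
  constructor
  · intro h
    -- so argNeg w ≥ arg τ > 0
    have hge : Complex.arg τ ≤ argNeg ((a : ℂ) * τ + (b : ℂ)) := by linarith
    set w : ℂ := (a : ℂ) * τ + (b : ℂ) with hw
    have hpos : 0 < argNeg w := lt_of_lt_of_le hargτpos hge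
    have hargw : argNeg w = Complex.arg w := by
      apply argNeg_of_ne
      intro h'
      unfold argNeg at hpos
      rw [if_pos h'] at hpos
      have := Real.pi_pos
      linarith
    rw [hargw] at hge
    have hwimnn : 0 ≤ w.im := Complex.arg_nonneg_iff.mp (le_trans hargτpos.le hge)
    have hwim : w.im = a * τ.im := by simp [hw]
    have ha : 0 < a := by
      rcases lt_trichotomy a 0 with h' | h' | h'
      · exfalso; rw [hwim] at hwimnn; nlinarith
      · exfalso
        subst h'
        have hb : b ≠ 0 := fun h'' => hab (by simp [h''])
        have hwb : w = (b : ℂ) := by simp [hw]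
        unfold argNeg at hpos
        rw [hwb] at hpos
        have hπ := Real.pi_pos
        rcases hb.lt_or_gt with hb' | hb'
        · rw [Complex.arg_ofReal_of_neg hb', if_pos rfl] at hpos
          linarith
        · rw [Complex.arg_ofReal_of_nonneg hb'.le,
            if_neg (by intro h; linarith)] at hpos
          exact lt_irrefl _ hpos
      · exact h'
    refine ⟨ha, ?_⟩
    exact (key_lemma τ hτ a b ha).mp hge
  · rintro ⟨ha, hb⟩
    have hge : Complex.arg τ ≤ Complex.arg ((a : ℂ) * τ + (b : ℂ)) :=
      (key_lemma τ hτ a b ha).mpr hb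
    have hwim : ((a : ℂ) * τ + (b : ℂ)).im = a * τ.im := by simp
    have hwim0 : 0 < ((a : ℂ) * τ + (b : ℂ)).im := by rw [hwim]; positivity
    have hne : Complex.arg ((a : ℂ) * τ + (b : ℂ)) ≠ Real.pi := by
      intro h
      exact hwim0.ne' (Complex.arg_eq_pi_iff.mp h).2
    rw [argNeg_of_ne _ hne]
    linarith
end
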